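/- arXiv:2507.06446 — 11 statements merged into one kernel-verified Lean document; each statement's English description precedes it below -/
import Mathlib

section
/- Let w : ℝ → ℝ^q be a bounded regressor. Then w is persistently exciting if and only if for every non-zero vector α ∈ ℝ^q the scalar signal t ↦ ⟨α, w(t)⟩ is persistently exciting. -/
open MeasureTheory Filter
open scoped Classical

noncomputable section

/-- A scalar signal `u` is persistently exciting (PE). -/
def ScalarPE (u : ℝ → ℝ) : Prop :=
  ∃ β T : ℝ, 0 < β ∧ 0 < T ∧
    ∀ t : ℝ, 0 ≤ t → β ≤ (1 / T) * ∫ τ in t..(t + T), (u τ) ^ 2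

/-- A regressor `w` is persistently exciting (PE), quadratic-form formulation. -/
def RegressorPE {E : Type*} [NormedAddCommGroup E] [InnerProductSpace ℝ E]
    (w : ℝ → E) : Prop :=
  ∃ β T : ℝ, 0 < β ∧ 0 < T ∧
    ∀ t : ℝ, 0 ≤ t → ∀ α : E,
      β * ‖α‖ ^ 2 ≤ (1 / T) * ∫ τ in t..(t + T), (inner ℝ α (w τ) : ℝ) ^ 2

/-- A regressor `w` is non-PE if every projection `⟨α, w⟩` fails to be PE. -/
def NonPE {E : Type*} [NormedAddCommGroup E] [InnerProductSpace ℝ E]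
    (w : ℝ → E) : Prop :=
  ∀ α : E, ¬ ScalarPE (fun t => (inner ℝ α (w t) : ℝ))

/-- The non-PE set `𝒲*` of a regressor `w`. -/
def nonPESet {E : Type*} [NormedAddCommGroup E] [InnerProductSpace ℝ E]
    (w : ℝ → E) : Set E :=
  {α : E | ¬ ScalarPE (fun t => (inner ℝ α (w t) : ℝ))}

/-- A regular regressor: bounded (on `[0, ∞)`) and its non-PE set is a linear subspace. -/
def RegularRegressor {E : Type*} [NormedAddCommGroup E] [InnerProductSpace ℝ E]
    (w : ℝ → E) : Prop :=
  (∃ M : ℝ, ∀ t : ℝ, 0 ≤ t → ‖w t‖ ≤ M) ∧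
  ∃ S : Submodule ℝ E, (S : Set E) = nonPESet w

variable {E : Type*} [NormedAddCommGroup E] [InnerProductSpace ℝ E] [MeasurableSpace E] [OpensMeasurableSpace E]

lemma aux_meas (w : ℝ → E) (hmeas : Measurable w) (α : E) :
    Measurable fun τ => (inner ℝ α (w τ) : ℝ) ^ 2 :=
  (((innerSL ℝ α).continuous.measurable.comp hmeas).pow_const 2)

lemma aux_int (w : ℝ → E) (hmeas : Measurable w) {C : ℝ}
    (hC : ∀ t : ℝ, 0 ≤ t → ‖w t‖ ≤ C) (α : E)
    {a b : ℝ} (ha : 0 ≤ a) (hab : a ≤ b) :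
    IntervalIntegrable (fun τ => (inner ℝ α (w τ) : ℝ) ^ 2) volume a b := by
  rw [intervalIntegrable_iff, Set.uIoc_of_le hab]
  refine Measure.integrableOn_of_bounded (M := (‖α‖ * C) ^ 2) measure_Ioc_lt_top.ne
    (aux_meas w hmeas α).aestronglyMeasurable ?_
  refine ae_restrict_of_forall_mem measurableSet_Ioc (fun x hx => ?_)
  have h1 : |(inner ℝ α (w x) : ℝ)| ≤ ‖α‖ * C :=
    (abs_real_inner_le_norm α (w x)).trans
      (mul_le_mul_of_nonneg_left (hC x (le_trans ha hx.1.le)) (norm_nonneg _))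
  have : ‖(inner ℝ α (w x) : ℝ) ^ 2‖ = |(inner ℝ α (w x) : ℝ)| ^ 2 := by
    rw [Real.norm_eq_abs, abs_pow]
  rw [this]
  exact pow_le_pow_left₀ (abs_nonneg _) h1 2

lemma aux_chain (w : ℝ → E) (hmeas : Measurable w) {C : ℝ}
    (hC : ∀ t : ℝ, 0 ≤ t → ‖w t‖ ≤ C) (α : E) {β T : ℝ} (hT : 0 < T)
    (hPE : ∀ t : ℝ, 0 ≤ t → T * β ≤ ∫ τ in t..(t + T), (inner ℝ α (w τ) : ℝ) ^ 2) :
    ∀ n : ℕ, ∀ t : ℝ, 0 ≤ t →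
      (n : ℝ) * T * β ≤ ∫ τ in t..(t + n * T), (inner ℝ α (w τ) : ℝ) ^ 2 := by
  intro n
  induction n with
  | zero => intro t ht; simp
  | succ n ih =>
    intro t ht
    have h1 : (0:ℝ) ≤ (n : ℝ) * T := by positivity
    have h2 : t ≤ t + n * T := by linarith
    have h3 : (0:ℝ) ≤ t + n * T := by linarith
    have hsplit : (∫ τ in t..(t + (n+1) * T), (inner ℝ α (w τ) : ℝ) ^ 2)
        = (∫ τ in t..(t + n * T), (inner ℝ α (w τ) : ℝ) ^ 2)
          + ∫ τ in (t + n * T)..(t + (n+1) * T), (inner ℝ α (w τ) : ℝ) ^ 2 :=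
      (intervalIntegral.integral_add_adjacent_intervals
        (aux_int w hmeas hC α ht h2)
        (aux_int w hmeas hC α h3 (by nlinarith))).symm
    have h4 := hPE (t + n * T) h3
    have h5 : t + n * T + T = t + (n+1) * T := by ring
    rw [h5] at h4
    have := ih t ht
    push_cast
    push_cast at this
    rw [hsplit]
    nlinarith

set_option maxHeartbeats 1000000 in
theorem stmt0 {q : ℕ} (w : ℝ → EuclideanSpace ℝ (Fin q))
    (hmeas : Measurable w) (hloc : LocallyIntegrable w volume)
    (hbdd : ∃ M : ℝ, ∀ t : ℝ, 0 ≤ t → ‖w t‖ ≤ M) :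
    RegressorPE w ↔
      ∀ α : EuclideanSpace ℝ (Fin q), α ≠ 0 →
        ScalarPE (fun t => (inner ℝ α (w t) : ℝ)) := by
  obtain ⟨M, hM⟩ := hbdd
  set C : ℝ := max M 0 with hCdef
  have hC : ∀ t : ℝ, 0 ≤ t → ‖w t‖ ≤ C := fun t ht => (hM t ht).trans (le_max_left _ _)
  have hC0 : (0:ℝ) ≤ C := le_max_right _ _
  have hnn : ∀ (α : EuclideanSpace ℝ (Fin q)) (a b : ℝ), a ≤ b →
      0 ≤ ∫ τ in a..b, (inner ℝ α (w τ) : ℝ) ^ 2 := fun α a b hab =>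
    intervalIntegral.integral_nonneg hab (fun x _ => sq_nonneg _)
  constructor
  · rintro ⟨β, T, hβ, hT, h⟩ α hα
    refine ⟨β * ‖α‖ ^ 2, T, ?_, hT, fun t ht => h t ht α⟩
    have hα' : 0 < ‖α‖ := norm_pos_iff.mpr hα
    positivity
  · intro hall
    rcases isEmpty_or_nonempty (Fin q) with hq | hq
    · refine ⟨1, 1, one_pos, one_pos, fun t ht α => ?_⟩
      have hα0 : α = 0 := Subsingleton.elim α 0
      subst hα0
      simp
    · obtain ⟨i0⟩ := hq
      set x0 : EuclideanSpace ℝ (Fin q) := EuclideanSpace.single i0 (1:ℝ) with hx0def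
      have hx0 : ‖x0‖ = 1 := by rw [hx0def, EuclideanSpace.norm_single]; norm_num
      set S := Metric.sphere (0 : EuclideanSpace ℝ (Fin q)) 1 with hSdef
      have key : ∀ x : S,
          ∃ bb TT : ℝ, 0 < bb ∧ 0 < TT ∧ ∀ t : ℝ, 0 ≤ t →
            TT * bb ≤ ∫ τ in t..(t + TT), (inner ℝ (x : EuclideanSpace ℝ (Fin q)) (w τ) : ℝ) ^ 2 := by
        rintro ⟨x, hx⟩
        have hx1 : ‖x‖ = 1 := mem_sphere_zero_iff_norm.mp hx
        have hxne : x ≠ 0 := by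
          intro h; rw [h, norm_zero] at hx1; norm_num at hx1
        obtain ⟨bb, TT, hbb, hTT, h⟩ := hall x hxne
        refine ⟨bb, TT, hbb, hTT, fun t ht => ?_⟩
        have h2 := mul_le_mul_of_nonneg_left (h t ht) hTT.le
        rw [← mul_assoc, mul_one_div, div_self hTT.ne', one_mul] at h2
        exact h2
      choose b T hb hT hPE using key
      have hx0S : x0 ∈ S := mem_sphere_zero_iff_norm.mpr hx0
      have hcov : S ⊆ ⋃ x : S, Metric.ball (x : EuclideanSpace ℝ (Fin q)) (b x / (8 * C ^ 2 + 8)) := by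
        intro y hy
        exact Set.mem_iUnion.mpr ⟨⟨y, hy⟩, Metric.mem_ball_self (by have := hb ⟨y, hy⟩; positivity)⟩
      obtain ⟨s, hs⟩ := (isCompact_sphere (0 : EuclideanSpace ℝ (Fin q)) 1).elim_finite_subcover
        (fun x : S => Metric.ball (x : EuclideanSpace ℝ (Fin q)) (b x / (8 * C ^ 2 + 8)))
        (fun x => Metric.isOpen_ball) hcov
      have hsne : s.Nonempty := by
        obtain ⟨i, hi, -⟩ := Set.mem_iUnion₂.mp (hs hx0S)
        exact ⟨i, hi⟩
      set Tm : ℝ := 2 * s.sup' hsne T with hTmdef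
      set βm : ℝ := s.inf' hsne b / 4 with hβmdef
      have hTmpos : 0 < Tm := by
        obtain ⟨i, hi⟩ := hsne
        have h1 := Finset.le_sup' T hi
        have h2 := hT i
        rw [hTmdef]; linarith
      have hβmpos : 0 < βm := by
        have h1 : (0:ℝ) < s.inf' hsne b := (Finset.lt_inf'_iff hsne).mpr fun i _ => hb i
        rw [hβmdef]; linarith
      have main : ∀ u : EuclideanSpace ℝ (Fin q), ‖u‖ = 1 → ∀ t : ℝ, 0 ≤ t →
          βm * Tm ≤ ∫ τ in t..(t + Tm), (inner ℝ u (w τ) : ℝ) ^ 2 := by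
        intro u hu t ht
        have huS : u ∈ S := mem_sphere_zero_iff_norm.mpr hu
        obtain ⟨i, his, hui⟩ := Set.mem_iUnion₂.mp (hs huS)
        have hTi : 0 < T i := hT i
        have hbi : 0 < b i := hb i
        have hTiTm : 2 * T i ≤ Tm := by
          have := Finset.le_sup' T his
          rw [hTmdef]; linarith
        set n : ℕ := ⌊Tm / T i⌋₊ with hndef
        have hfl : Tm / T i < (n : ℝ) + 1 := Nat.lt_floor_add_one _
        have hnTi : Tm - T i ≤ (n : ℝ) * T i := by
          have := (div_lt_iff₀ hTi).mp hfl
          nlinarith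
        have hnTile : (n : ℝ) * T i ≤ Tm := by
          have h1 : (n : ℝ) ≤ Tm / T i := Nat.floor_le (by positivity)
          calc (n : ℝ) * T i ≤ (Tm / T i) * T i := by nlinarith
            _ = Tm := by field_simp
        have hnTi0 : (0:ℝ) ≤ (n : ℝ) * T i := by positivity
        -- Step 1: lower bound for the center i
        have hchain := aux_chain w hmeas hC (i : EuclideanSpace ℝ (Fin q)) hTi (hPE i) n t ht
        have hsplit : (∫ τ in t..(t + Tm), (inner ℝ (i : EuclideanSpace ℝ (Fin q)) (w τ) : ℝ) ^ 2)
            = (∫ τ in t..(t + (n : ℝ) * T i), (inner ℝ (i : EuclideanSpace ℝ (Fin q)) (w τ) : ℝ) ^ 2)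
              + ∫ τ in (t + (n : ℝ) * T i)..(t + Tm), (inner ℝ (i : EuclideanSpace ℝ (Fin q)) (w τ) : ℝ) ^ 2 :=
          (intervalIntegral.integral_add_adjacent_intervals
            (aux_int w hmeas hC _ ht (by linarith))
            (aux_int w hmeas hC _ (by linarith) (by linarith))).symm
        have htail := hnn i (t + (n : ℝ) * T i) (t + Tm) (by linarith)
        have hstep1 : Tm / 2 * b i ≤ ∫ τ in t..(t + Tm), (inner ℝ (i : EuclideanSpace ℝ (Fin q)) (w τ) : ℝ) ^ 2 := by
          rw [hsplit]
          nlinarith [mul_le_mul_of_nonneg_right hnTi hbi.le]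
        -- Step 2: Lipschitz comparison between u and i
        have hdist : ‖u - (i : EuclideanSpace ℝ (Fin q))‖ < b i / (8 * C ^ 2 + 8) := by
          rw [← dist_eq_norm]; exact Metric.mem_ball.mp hui
        have hi1 : ‖(i : EuclideanSpace ℝ (Fin q))‖ = 1 := mem_sphere_zero_iff_norm.mp i.2
        have hptwise : ∀ τ ∈ Set.uIoc t (t + Tm),
            ‖(inner ℝ u (w τ) : ℝ) ^ 2 - (inner ℝ (i : EuclideanSpace ℝ (Fin q)) (w τ) : ℝ) ^ 2‖
              ≤ 2 * C ^ 2 * ‖u - (i : EuclideanSpace ℝ (Fin q))‖ := by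
          intro τ hτ
          have hτ0 : 0 ≤ τ := by
            rw [Set.uIoc_of_le (by linarith)] at hτ
            exact le_trans ht hτ.1.le
          have hw := hC τ hτ0
          have e1 : (inner ℝ u (w τ) : ℝ) ^ 2 - (inner ℝ (i : EuclideanSpace ℝ (Fin q)) (w τ) : ℝ) ^ 2
              = (inner ℝ (u - (i : EuclideanSpace ℝ (Fin q))) (w τ) : ℝ)
                * (inner ℝ (u + (i : EuclideanSpace ℝ (Fin q))) (w τ) : ℝ) := by
            rw [inner_sub_left, inner_add_left]; ring
          rw [e1, Real.norm_eq_abs, abs_mul]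
          have b1 : |(inner ℝ (u - (i : EuclideanSpace ℝ (Fin q))) (w τ) : ℝ)|
              ≤ ‖u - (i : EuclideanSpace ℝ (Fin q))‖ * C :=
            (abs_real_inner_le_norm _ _).trans
              (mul_le_mul_of_nonneg_left hw (norm_nonneg _))
          have hsum : ‖u + (i : EuclideanSpace ℝ (Fin q))‖ ≤ 2 := by
            calc ‖u + (i : EuclideanSpace ℝ (Fin q))‖ ≤ ‖u‖ + ‖(i : EuclideanSpace ℝ (Fin q))‖ := norm_add_le _ _
              _ = 2 := by rw [hu, hi1]; norm_num
          have b2 : |(inner ℝ (u + (i : EuclideanSpace ℝ (Fin q))) (w τ) : ℝ)| ≤ 2 * C :=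
            (abs_real_inner_le_norm _ _).trans
              (mul_le_mul hsum hw (norm_nonneg _) (by norm_num))
          calc |(inner ℝ (u - (i : EuclideanSpace ℝ (Fin q))) (w τ) : ℝ)|
                * |(inner ℝ (u + (i : EuclideanSpace ℝ (Fin q))) (w τ) : ℝ)|
              ≤ (‖u - (i : EuclideanSpace ℝ (Fin q))‖ * C) * (2 * C) :=
                mul_le_mul b1 b2 (abs_nonneg _) (by positivity)
            _ = 2 * C ^ 2 * ‖u - (i : EuclideanSpace ℝ (Fin q))‖ := by ring
        have hint : ‖(∫ τ in t..(t + Tm), (inner ℝ u (w τ) : ℝ) ^ 2)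
              - ∫ τ in t..(t + Tm), (inner ℝ (i : EuclideanSpace ℝ (Fin q)) (w τ) : ℝ) ^ 2‖
            ≤ 2 * C ^ 2 * ‖u - (i : EuclideanSpace ℝ (Fin q))‖ * |t + Tm - t| := by
          rw [← intervalIntegral.integral_sub
            (aux_int w hmeas hC u ht (by linarith))
            (aux_int w hmeas hC _ ht (by linarith))]
          exact intervalIntegral.norm_integral_le_of_norm_le_const hptwise
        have habs : |t + Tm - t| = Tm := by
          rw [add_sub_cancel_left, abs_of_pos hTmpos]
        rw [habs] at hint
        have hlip : 2 * C ^ 2 * ‖u - (i : EuclideanSpace ℝ (Fin q))‖ ≤ b i / 4 := by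
          have h8 : (0:ℝ) < 8 * C ^ 2 + 8 := by positivity
          have hd0 : (0:ℝ) ≤ ‖u - (i : EuclideanSpace ℝ (Fin q))‖ := norm_nonneg _
          have h2 : 2 * C ^ 2 * (b i / (8 * C ^ 2 + 8)) ≤ b i / 4 := by
            rw [← mul_div_assoc, div_le_div_iff₀ h8 (by norm_num : (0:ℝ) < 4)]
            nlinarith [sq_nonneg C, hbi.le]
          nlinarith [mul_le_mul_of_nonneg_left hdist.le (by positivity : (0:ℝ) ≤ 2 * C ^ 2)]
        rw [Real.norm_eq_abs] at hint
        have hrw := abs_le.mp hint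
        have hinf : s.inf' hsne b ≤ b i := Finset.inf'_le b his
        have hIu : (∫ τ in t..(t + Tm), (inner ℝ (i : EuclideanSpace ℝ (Fin q)) (w τ) : ℝ) ^ 2)
            - (∫ τ in t..(t + Tm), (inner ℝ u (w τ) : ℝ) ^ 2) ≤ b i / 4 * Tm := by
          have h1 := hrw.1
          have h2 := mul_le_mul_of_nonneg_right hlip hTmpos.le
          linarith
        rw [hβmdef]
        nlinarith [mul_le_mul_of_nonneg_right hinf (by linarith : (0:ℝ) ≤ Tm / 4)]
      -- assemble
      refine ⟨βm, Tm, hβmpos, hTmpos, fun t ht α => ?_⟩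
      by_cases hα : α = 0
      · subst hα
        have h0 := hnn 0 t (t + Tm) (by linarith)
        have h1 : (0:ℝ) ≤ (1 / Tm) * ∫ τ in t..(t + Tm), (inner ℝ (0 : EuclideanSpace ℝ (Fin q)) (w τ) : ℝ) ^ 2 :=
          mul_nonneg (by positivity) h0
        simpa using h1
      · have hα' : 0 < ‖α‖ := norm_pos_iff.mpr hα
        set u : EuclideanSpace ℝ (Fin q) := ‖α‖⁻¹ • α with hudef
        have hu : ‖u‖ = 1 := by
          rw [hudef, norm_smul, norm_inv, norm_norm, inv_mul_cancel₀ hα'.ne']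
        have hscale : ∀ τ : ℝ, (inner ℝ α (w τ) : ℝ) ^ 2 = ‖α‖ ^ 2 * (inner ℝ u (w τ) : ℝ) ^ 2 := by
          intro τ
          have h1 : (inner ℝ α (w τ) : ℝ) = ‖α‖ * (inner ℝ u (w τ) : ℝ) := by
            rw [hudef, real_inner_smul_left]
            field_simp
          rw [h1]; ring
        have hIeq : (∫ τ in t..(t + Tm), (inner ℝ α (w τ) : ℝ) ^ 2)
            = ‖α‖ ^ 2 * ∫ τ in t..(t + Tm), (inner ℝ u (w τ) : ℝ) ^ 2 := by
          rw [← intervalIntegral.integral_const_mul]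
          exact intervalIntegral.integral_congr fun τ _ => hscale τ
        have hmain := main u hu t ht
        have h2 : βm ≤ (1 / Tm) * ∫ τ in t..(t + Tm), (inner ℝ u (w τ) : ℝ) ^ 2 := by
          rw [one_div, inv_mul_eq_div, le_div_iff₀ hTmpos]
          linarith
        rw [hIeq]
        calc βm * ‖α‖ ^ 2 ≤ ((1 / Tm) * ∫ τ in t..(t + Tm), (inner ℝ u (w τ) : ℝ) ^ 2) * ‖α‖ ^ 2 :=
              mul_le_mul_of_nonneg_right h2 (by positivity)
          _ = (1 / Tm) * (‖α‖ ^ 2 * ∫ τ in t..(t + Tm), (inner ℝ u (w τ) : ℝ) ^ 2) := by ring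
end
end

section
/- Let v : ℝ → ℝ^q be a persistently exciting regressor, and let γ : [0,∞) → ℝ be the dyadic pulse train defined by partitioning [0,∞) into consecutive intervals I_k := [∑_{j=1}^{k-1} 2^j, ∑_{j=1}^{k} 2^j) for k = 1, 2, 3, …, setting γ(t) = 1 for t ∈ I_k with k odd and γ(t) = 0 otherwise. Then both w₁(t) := γ(t)·v(t) and w₂(t) := (1 − γ(t))·v(t) are non-PE. -/
open MeasureTheory Filter
open scoped Classical

noncomputable section

/-- The dyadic pulse train: `[0, ∞)` is partitioned into consecutive intervals
`I_k = [∑_{j=1}^{k-1} 2^j, ∑_{j=1}^{k} 2^j) = [2^k - 2, 2^(k+1) - 2)` for `k = 1, 2, …`;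
`γ(t) = 1` on `I_k` for odd `k`, and `γ(t) = 0` elsewhere. -/
def gammaPulse (t : ℝ) : ℝ :=
  if ∃ k : ℕ, Odd k ∧ ((2 : ℝ) ^ k - 2 ≤ t ∧ t < (2 : ℝ) ^ (k + 1) - 2) then 1 else 0

lemma gamma_one {k : ℕ} (hk : Odd k) {τ : ℝ}
    (h1 : (2:ℝ)^k - 2 ≤ τ) (h2 : τ < (2:ℝ)^(k+1) - 2) : gammaPulse τ = 1 := by
  unfold gammaPulse
  exact if_pos ⟨k, hk, h1, h2⟩

lemma gamma_zero {k : ℕ} (hk : Even k) {τ : ℝ}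
    (h1 : (2:ℝ)^k - 2 ≤ τ) (h2 : τ < (2:ℝ)^(k+1) - 2) : gammaPulse τ = 0 := by
  unfold gammaPulse
  apply if_neg
  rintro ⟨m, hm, hm1, hm2⟩
  have hne : m ≠ k := by
    intro h; rw [h] at hm; exact (Nat.not_odd_iff_even.mpr hk) hm
  rcases lt_or_gt_of_ne hne with h | h
  · have : (2:ℝ)^(m+1) ≤ 2^k := pow_le_pow_right₀ one_le_two (by omega)
    linarith
  · have : (2:ℝ)^(k+1) ≤ 2^m := pow_le_pow_right₀ one_le_two (by omega)
    linarith

lemma not_pe_of_vanish (f : ℝ → ℝ)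
    (h : ∀ T : ℝ, 0 < T → ∃ t : ℝ, 0 ≤ t ∧ ∀ τ ∈ Set.uIcc t (t+T), f τ = 0) :
    ¬ ScalarPE f := by
  rintro ⟨β, T, hβ, hT, hpe⟩
  obtain ⟨t, ht, hz⟩ := h T hT
  have hint : (∫ τ in t..(t + T), (f τ) ^ 2) = 0 := by
    have : (∫ τ in t..(t + T), (f τ) ^ 2) = ∫ τ in t..(t + T), (0:ℝ) := by
      apply intervalIntegral.integral_congr
      intro τ hτ
      simp [hz τ hτ]
    rw [this, intervalIntegral.integral_zero]
  have := hpe t ht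
  rw [hint] at this
  simp at this
  linarith

lemma exists_interval (T : ℝ) (hT : 0 < T) (p : ℕ → Prop)
    (hp : ∀ n, ∃ k, n ≤ k ∧ p k) :
    ∃ k : ℕ, p k ∧ 1 ≤ k ∧ 0 ≤ (2:ℝ)^k - 2 ∧
      ∀ τ ∈ Set.uIcc ((2:ℝ)^k - 2) ((2:ℝ)^k - 2 + T),
        (2:ℝ)^k - 2 ≤ τ ∧ τ < (2:ℝ)^(k+1) - 2 := by
  obtain ⟨n, hn⟩ := pow_unbounded_of_one_lt T (one_lt_two (α := ℝ))
  obtain ⟨k, hnk, hpk⟩ := hp (n + 1)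
  have hTk : T < (2:ℝ)^k := lt_of_lt_of_le hn (pow_le_pow_right₀ one_le_two (by omega))
  have h1k : (2:ℝ) ≤ 2^k := by
    calc (2:ℝ) = 2^1 := (pow_one 2).symm
    _ ≤ 2^k := pow_le_pow_right₀ one_le_two (by omega)
  refine ⟨k, hpk, by omega, by linarith, ?_⟩
  intro τ hτ
  rw [Set.uIcc_of_le (by linarith)] at hτ
  obtain ⟨h1, h2⟩ := hτ
  have : (2:ℝ)^(k+1) = 2^k * 2 := pow_succ 2 k
  exact ⟨h1, by linarith⟩

theorem stmt1 {q : ℕ} (v : ℝ → EuclideanSpace ℝ (Fin q))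
    (hmeas : Measurable v) (hloc : LocallyIntegrable v volume)
    (hPE : RegressorPE v) :
    NonPE (fun t => gammaPulse t • v t) ∧
    NonPE (fun t => (1 - gammaPulse t) • v t) := by
  constructor
  · intro α
    apply not_pe_of_vanish
    intro T hT
    obtain ⟨k, hk, hk1, hk0, hiv⟩ :=
      exists_interval T hT Even (fun n => ⟨2 * n, by omega, even_two_mul n⟩)
    refine ⟨(2:ℝ)^k - 2, hk0, ?_⟩
    intro τ hτ
    obtain ⟨h1, h2⟩ := hiv τ hτ
    simp [gamma_zero hk h1 h2]
  · intro α
    apply not_pe_of_vanish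
    intro T hT
    obtain ⟨k, hk, hk1, hk0, hiv⟩ :=
      exists_interval T hT Odd (fun n => ⟨2 * n + 1, by omega, odd_two_mul_add_one n⟩)
    refine ⟨(2:ℝ)^k - 2, hk0, ?_⟩
    intro τ hτ
    obtain ⟨h1, h2⟩ := hiv τ hτ
    simp [gamma_one hk h1 h2]
end
end

section
/- Let w₁ : ℝ → ℝ^{q₁} and w₂ : ℝ → ℝ^{q₂} be regressors such that the stacked regressor w(t) := (w₁(t), w₂(t)) ∈ ℝ^{q₁} × ℝ^{q₂} is a regular regressor. If w₁ is non-PE and w₂ is non-PE, then w is non-PE. -/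
open MeasureTheory Filter
open scoped Classical

noncomputable section

theorem stmt5 {q1 q2 : ℕ}
    (w1 : ℝ → EuclideanSpace ℝ (Fin q1)) (w2 : ℝ → EuclideanSpace ℝ (Fin q2))
    (hmeas1 : Measurable w1) (hloc1 : LocallyIntegrable w1 volume)
    (hmeas2 : Measurable w2) (hloc2 : LocallyIntegrable w2 volume)
    (w : ℝ → WithLp 2 (EuclideanSpace ℝ (Fin q1) × EuclideanSpace ℝ (Fin q2)))
    (hw : ∀ t : ℝ, w t =
      (WithLp.equiv 2 (EuclideanSpace ℝ (Fin q1) × EuclideanSpace ℝ (Fin q2))).symm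
        (w1 t, w2 t))
    (hreg : RegularRegressor w)
    (h1 : NonPE w1) (h2 : NonPE w2) :
    NonPE w := by
  obtain ⟨-, S, hS⟩ := hreg
  intro α
  set e := WithLp.equiv 2 (EuclideanSpace ℝ (Fin q1) × EuclideanSpace ℝ (Fin q2)) with he
  set a : WithLp 2 (EuclideanSpace ℝ (Fin q1) × EuclideanSpace ℝ (Fin q2)) :=
    e.symm ((e α).1, 0) with ha
  set b : WithLp 2 (EuclideanSpace ℝ (Fin q1) × EuclideanSpace ℝ (Fin q2)) :=
    e.symm (0, (e α).2) with hb
  have hab : a + b = α := by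
    apply e.injective
    ext <;> simp [ha, hb, he]
  have haS : a ∈ S := by
    rw [← SetLike.mem_coe, hS]
    show ¬ ScalarPE _
    have : (fun t => (inner ℝ a (w t) : ℝ)) = fun t => (inner ℝ (e α).1 (w1 t) : ℝ) := by
      funext t
      rw [hw t, WithLp.prod_inner_apply]
      simp [ha, he]
    rw [this]
    exact h1 (e α).1
  have hbS : b ∈ S := by
    rw [← SetLike.mem_coe, hS]
    show ¬ ScalarPE _
    have : (fun t => (inner ℝ b (w t) : ℝ)) = fun t => (inner ℝ (e α).2 (w2 t) : ℝ) := by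
      funext t
      rw [hw t, WithLp.prod_inner_apply]
      simp [hb, he]
    rw [this]
    exact h2 (e α).2
  have : α ∈ S := hab ▸ S.add_mem haS hbS
  rw [← SetLike.mem_coe, hS] at this
  exact this
end
end

section
/- Let w₁, w₂ : ℝ → ℝ^{q₁} be regressors such that the stacked regressor w(t) := (w₁(t), w₂(t)) ∈ ℝ^{q₁} × ℝ^{q₁} is a regular regressor. If w₁ is non-PE and w₂ is non-PE, then the regressor t ↦ w₁(t) + w₂(t) is non-PE. -/
open MeasureTheory Filter
open scoped Classical

noncomputable section

theorem stmt6 {q1 : ℕ}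
    (w1 w2 : ℝ → EuclideanSpace ℝ (Fin q1))
    (hmeas1 : Measurable w1) (hloc1 : LocallyIntegrable w1 volume)
    (hmeas2 : Measurable w2) (hloc2 : LocallyIntegrable w2 volume)
    (w : ℝ → WithLp 2 (EuclideanSpace ℝ (Fin q1) × EuclideanSpace ℝ (Fin q1)))
    (hw : ∀ t : ℝ, w t =
      (WithLp.equiv 2 (EuclideanSpace ℝ (Fin q1) × EuclideanSpace ℝ (Fin q1))).symm
        (w1 t, w2 t))
    (hreg : RegularRegressor w)
    (h1 : NonPE w1) (h2 : NonPE w2) :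
    NonPE (fun t => w1 t + w2 t) := by
  obtain ⟨-, S, hS⟩ := hreg
  intro α
  set e := (WithLp.equiv 2 (EuclideanSpace ℝ (Fin q1) × EuclideanSpace ℝ (Fin q1))).symm
  have ha : e (α, 0) ∈ S := by
    rw [← SetLike.mem_coe, hS]
    have : (fun t => (inner ℝ (e (α, 0)) (w t) : ℝ)) = fun t => (inner ℝ α (w1 t) : ℝ) := by
      funext t
      rw [hw t, WithLp.prod_inner_apply]
      simp [e]
    exact (show ¬ ScalarPE _ by rw [this]; exact h1 α)
  have hb : e (0, α) ∈ S := by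
    rw [← SetLike.mem_coe, hS]
    have : (fun t => (inner ℝ (e (0, α)) (w t) : ℝ)) = fun t => (inner ℝ α (w2 t) : ℝ) := by
      funext t
      rw [hw t, WithLp.prod_inner_apply]
      simp [e]
    exact (show ¬ ScalarPE _ by rw [this]; exact h2 α)
  have hab : e (α, 0) + e (0, α) ∈ S := S.add_mem ha hb
  rw [← SetLike.mem_coe, hS] at hab
  have key : (fun t => (inner ℝ α ((fun t => w1 t + w2 t) t) : ℝ)) =
      fun t => (inner ℝ (e (α, 0) + e (0, α)) (w t) : ℝ) := by
    funext t
    rw [hw t, WithLp.prod_inner_apply]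
    simp [e, inner_add_left, inner_add_right, mul_add, Finset.sum_add_distrib]
  rw [key]
  exact hab
end
end

section
/- Let w₁, w₂ : ℝ → ℝ^{q₁} be regressors such that the stacked regressor w(t) := (w₁(t), w₂(t)) ∈ ℝ^{q₁} × ℝ^{q₁} is a regular regressor. If w₁ is non-PE and w₂ is persistently exciting, then the regressor t ↦ w₁(t) + w₂(t) is persistently exciting. -/
set_option maxHeartbeats 1000000

open MeasureTheory Filter
open scoped Classical

noncomputable section

theorem stmt7 {q1 : ℕ}
    (w1 w2 : ℝ → EuclideanSpace ℝ (Fin q1))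
    (hmeas1 : Measurable w1) (hloc1 : LocallyIntegrable w1 volume)
    (hmeas2 : Measurable w2) (hloc2 : LocallyIntegrable w2 volume)
    (w : ℝ → WithLp 2 (EuclideanSpace ℝ (Fin q1) × EuclideanSpace ℝ (Fin q1)))
    (hw : ∀ t : ℝ, w t =
      (WithLp.equiv 2 (EuclideanSpace ℝ (Fin q1) × EuclideanSpace ℝ (Fin q1))).symm
        (w1 t, w2 t))
    (hreg : RegularRegressor w)
    (h1 : NonPE w1) (h2 : RegressorPE w2) :
    RegressorPE (fun t => w1 t + w2 t) := by
  obtain ⟨⟨M0, hM0⟩, S, hS⟩ := hreg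
  set v : ℝ → EuclideanSpace ℝ (Fin q1) := fun t => w1 t + w2 t with hvdef
  have hvm : Measurable v := hmeas1.add hmeas2
  set C : ℝ := 2 * max M0 0 with hCdef
  have hC0 : 0 ≤ C := by positivity
  -- bound on v on [0, ∞)
  have hCv : ∀ t : ℝ, 0 ≤ t → ‖v t‖ ≤ C := by
    intro t ht
    have h := WithLp.prod_norm_sq_eq_of_L2 (w t)
    have hfst : (w t).fst = w1 t := by rw [hw t]; rfl
    have hsnd : (w t).snd = w2 t := by rw [hw t]; rfl
    rw [hfst, hsnd] at h
    have hmax : ‖w t‖ ≤ max M0 0 := (hM0 t ht).trans (le_max_left _ _)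
    have hmax0 : (0:ℝ) ≤ max M0 0 := le_max_right _ _
    have hsq : ‖w t‖^2 ≤ (max M0 0)^2 := pow_le_pow_left₀ (norm_nonneg _) hmax 2
    have h1b : ‖w1 t‖ ≤ max M0 0 :=
      le_of_pow_le_pow_left₀ two_ne_zero hmax0 (by nlinarith [sq_nonneg ‖w2 t‖])
    have h2b : ‖w2 t‖ ≤ max M0 0 :=
      le_of_pow_le_pow_left₀ two_ne_zero hmax0 (by nlinarith [sq_nonneg ‖w1 t‖])
    calc ‖v t‖ ≤ ‖w1 t‖ + ‖w2 t‖ := norm_add_le _ _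
      _ ≤ C := by rw [hCdef]; linarith
  -- integrability
  have hInt : ∀ (α : EuclideanSpace ℝ (Fin q1)) (a b : ℝ), 0 ≤ a → a ≤ b →
      IntervalIntegrable (fun τ => (inner ℝ α (v τ) : ℝ)^2) volume a b := by
    intro α a b ha hab
    have hmble : Measurable fun τ => (inner ℝ α (v τ) : ℝ)^2 :=
      (measurable_const.inner hvm).pow measurable_const
    rw [intervalIntegrable_iff_integrableOn_Ioc_of_le hab]
    refine Integrable.mono' (g := fun _ => (‖α‖*C)^2)
      (integrableOn_const measure_Ioc_lt_top.ne) hmble.aestronglyMeasurable.restrict ?_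
    refine (ae_restrict_iff' measurableSet_Ioc).mpr (ae_of_all _ fun x hx => ?_)
    have hx0 : (0:ℝ) ≤ x := ha.trans hx.1.le
    have hb1 : |(inner ℝ α (v x) : ℝ)| ≤ ‖α‖ * C :=
      (abs_real_inner_le_norm α (v x)).trans
        (mul_le_mul_of_nonneg_left (hCv x hx0) (norm_nonneg α))
    have : |(inner ℝ α (v x) : ℝ)|^2 ≤ (‖α‖*C)^2 := pow_le_pow_left₀ (abs_nonneg _) hb1 2
    simpa [abs_pow, sq_abs] using this
  by_contra hnot
  simp only [RegressorPE] at hnot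
  push_neg at hnot
  -- extract bad sequence
  have key : ∀ n : ℕ, ∃ t : ℝ, 0 ≤ t ∧ ∃ α : EuclideanSpace ℝ (Fin q1), ‖α‖ = 1 ∧
      ∫ τ in t..(t + ((n:ℝ)+1)), (inner ℝ α (v τ) : ℝ)^2 < 1 := by
    intro n
    have hp : (0:ℝ) < 1/((n:ℝ)+1) := by positivity
    obtain ⟨t, ht, α, hα⟩ := hnot (1/((n:ℝ)+1)) ((n:ℝ)+1) hp (by positivity)
    have hnn : (0:ℝ) ≤ ∫ τ in t..(t + ((n:ℝ)+1)), (inner ℝ α (v τ) : ℝ)^2 :=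
      intervalIntegral.integral_nonneg (by linarith) (fun u _ => sq_nonneg _)
    have hα0 : α ≠ 0 := by
      rintro rfl
      simp only [norm_zero, ne_eq, OfNat.ofNat_ne_zero, not_false_eq_true, zero_pow,
        mul_zero] at hα
      nlinarith
    have hI : (∫ τ in t..(t + ((n:ℝ)+1)), (inner ℝ α (v τ) : ℝ)^2) < ‖α‖^2 :=
      (mul_lt_mul_iff_right₀ hp).mp hα
    refine ⟨t, ht, ‖α‖⁻¹ • α, norm_smul_inv_norm hα0, ?_⟩
    have hscale : ∀ τ : ℝ, (inner ℝ (‖α‖⁻¹ • α) (v τ) : ℝ)^2 = (‖α‖^2)⁻¹ * (inner ℝ α (v τ) : ℝ)^2 := by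
      intro τ; rw [real_inner_smul_left, mul_pow, inv_pow]
    have hinv : (0:ℝ) < (‖α‖^2)⁻¹ := by
      have := norm_pos_iff.mpr hα0; positivity
    calc ∫ τ in t..(t + ((n:ℝ)+1)), (inner ℝ (‖α‖⁻¹ • α) (v τ) : ℝ)^2
        = (‖α‖^2)⁻¹ * ∫ τ in t..(t + ((n:ℝ)+1)), (inner ℝ α (v τ) : ℝ)^2 := by
          simp_rw [hscale]; rw [intervalIntegral.integral_const_mul]
      _ < (‖α‖^2)⁻¹ * ‖α‖^2 := by exact (mul_lt_mul_iff_right₀ hinv).mpr hI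
      _ = 1 := inv_mul_cancel₀ (pow_pos (norm_pos_iff.mpr hα0) 2).ne'
  choose tseq htseq αs hαs hsmall using key
  have hsph : ∀ n, αs n ∈ Metric.sphere (0 : EuclideanSpace ℝ (Fin q1)) 1 := fun n =>
    mem_sphere_zero_iff_norm.mpr (hαs n)
  obtain ⟨A, hA, φ, hφ, hconv⟩ :=
    (isCompact_sphere (0 : EuclideanSpace ℝ (Fin q1)) 1).tendsto_subseq hsph
  have hA1 : ‖A‖ = 1 := mem_sphere_zero_iff_norm.mp hA
  -- the limit direction is not scalar-PE for v
  have hnotPE : ¬ ScalarPE (fun s => (inner ℝ A (v s) : ℝ)) := by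
    rintro ⟨β, T, hβ, hT, hPE⟩
    set ε : ℝ := β / (2*(2*C^2+1)) with hε
    have hε0 : 0 < ε := by positivity
    obtain ⟨N, hN⟩ := exists_nat_gt (T * (2/(β*T) + 2))
    obtain ⟨k0, hk0⟩ := Metric.tendsto_atTop.mp hconv ε hε0
    set n := φ (max k0 N) with hn
    have hkn : (N:ℝ) ≤ (n:ℝ) := by
      exact_mod_cast (le_max_right k0 N).trans hφ.le_apply
    have hdist : dist (αs n) A < ε := hk0 (max k0 N) (le_max_left _ _)
    set s := tseq n with hsdef
    have hs0 : 0 ≤ s := htseq n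
    set L : ℝ := (n:ℝ) + 1 with hL
    have hL0 : 0 < L := by positivity
    have hint1 : ∫ τ in s..(s+L), (inner ℝ (αs n) (v τ) : ℝ)^2 < 1 := hsmall n
    set m : ℕ := ⌊L / T⌋₊ with hm
    have hmlb : L / T - 1 < (m:ℝ) := Nat.sub_one_lt_floor _
    have hmub : (m:ℝ) ≤ L / T := Nat.floor_le (by positivity)
    have hmT : (m:ℝ)*T ≤ L := by
      rw [← le_div_iff₀ hT]; exact hmub
    have hNlb : T * (2/(β*T) + 2) < L := by
      have : ((N:ℝ)) < L := by rw [hL]; linarith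
      linarith [hN]
    have hm2 : 2/(β*T) + 1 < (m:ℝ) := by
      have hdiv : 2/(β*T) + 2 < L/T := by
        rw [lt_div_iff₀ hT]; nlinarith
      linarith
    have hm0' : (0:ℝ) < (m:ℝ) := by
      have : (0:ℝ) < 2/(β*T) + 1 := by positivity
      linarith
    -- find a good subinterval of length T
    have hsub : ∃ j, j < m ∧
        (∫ τ in (s + j*T)..(s + j*T + T), (inner ℝ (αs n) (v τ) : ℝ)^2) < 1/(m:ℝ) := by
      by_contra hcon
      push_neg at hcon
      have hadj : ∀ k, k < m → IntervalIntegrable (fun τ => (inner ℝ (αs n) (v τ) : ℝ)^2) volume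
          (s + k*T) (s + (k+1:ℕ)*T) := by
        intro k _
        refine hInt _ _ _ (add_nonneg hs0 (by positivity)) ?_
        push_cast
        have hkk : ((k:ℝ)) * T ≤ ((k:ℝ)+1) * T := by nlinarith [hT.le]
        linarith
      have hsum := intervalIntegral.sum_integral_adjacent_intervals
        (a := fun j : ℕ => s + j*T) (n := m) hadj
      have hlb : (1:ℝ) ≤ ∑ j ∈ Finset.range m,
          ∫ τ in (s + j*T)..(s + (j+1:ℕ)*T), (inner ℝ (αs n) (v τ) : ℝ)^2 := by
        have hstep : ∀ j ∈ Finset.range m, (1:ℝ)/(m:ℝ) ≤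
            ∫ τ in (s + j*T)..(s + (j+1:ℕ)*T), (inner ℝ (αs n) (v τ) : ℝ)^2 := by
          intro j hj
          have := hcon j (Finset.mem_range.mp hj)
          have heq : s + ((j:ℝ)+1)*T = s + j*T + T := by ring
          push_cast
          rw [heq]
          exact this
        calc (1:ℝ) = m * (1/(m:ℝ)) := by field_simp
          _ ≤ ∑ j ∈ Finset.range m, ∫ τ in (s + j*T)..(s + (j+1:ℕ)*T),
              (inner ℝ (αs n) (v τ) : ℝ)^2 := by
            have := Finset.card_nsmul_le_sum (Finset.range m)
              (fun j => ∫ τ in (s + j*T)..(s + (j+1:ℕ)*T), (inner ℝ (αs n) (v τ) : ℝ)^2)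
              (1/(m:ℝ)) hstep
            simpa [nsmul_eq_mul, mul_comm] using this
      rw [hsum] at hlb
      simp only [Nat.cast_zero, zero_mul, add_zero] at hlb
      have hmono : (∫ τ in s..(s + (m:ℝ)*T), (inner ℝ (αs n) (v τ) : ℝ)^2)
          ≤ ∫ τ in s..(s+L), (inner ℝ (αs n) (v τ) : ℝ)^2 := by
        have hmT0 : 0 ≤ (m:ℝ)*T := by positivity
        apply intervalIntegral.integral_mono_interval (le_refl s)
          (by linarith) (by linarith)
          (ae_of_all _ fun x => sq_nonneg _) (hInt _ _ _ hs0 (by linarith))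
      linarith
    obtain ⟨j, hjm, hjint⟩ := hsub
    set t' : ℝ := s + j*T with ht'def
    have ht'0 : 0 ≤ t' := add_nonneg hs0 (by positivity)
    have hlow := hPE t' ht'0
    -- pointwise comparison
    have hpt : ∀ x ∈ Set.Icc t' (t'+T),
        (inner ℝ A (v x) : ℝ)^2 ≤ (inner ℝ (αs n) (v x) : ℝ)^2 + 2*C^2*ε := by
      intro x hx
      have hx0 : 0 ≤ x := ht'0.trans hx.1
      have hvb := hCv x hx0
      have hfg : |(inner ℝ A (v x) : ℝ) - (inner ℝ (αs n) (v x) : ℝ)| ≤ ε * C := by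
        have hsplit : (inner ℝ A (v x) : ℝ) - (inner ℝ (αs n) (v x) : ℝ)
            = inner ℝ (A - αs n) (v x) := (inner_sub_left _ _ _).symm
        rw [hsplit]
        refine (abs_real_inner_le_norm _ _).trans (mul_le_mul ?_ hvb (norm_nonneg _) hε0.le)
        have : ‖A - αs n‖ = dist (αs n) A := by rw [dist_eq_norm, norm_sub_rev]
        rw [this]; exact hdist.le
      have hf : |(inner ℝ A (v x) : ℝ)| ≤ C := by
        refine (abs_real_inner_le_norm _ _).trans ?_
        rw [hA1, one_mul]; exact hvb
      have hg : |(inner ℝ (αs n) (v x) : ℝ)| ≤ C := by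
        refine (abs_real_inner_le_norm _ _).trans ?_
        rw [hαs n, one_mul]; exact hvb
      set f := (inner ℝ A (v x) : ℝ)
      set g := (inner ℝ (αs n) (v x) : ℝ)
      have h2' : (f-g)*(f+g) ≤ |f-g| * |f+g| := by
        calc (f-g)*(f+g) ≤ |(f-g)*(f+g)| := le_abs_self _
          _ = |f - g| * |f + g| := abs_mul _ _
      have h3 : |f+g| ≤ 2*C := (abs_add_le f g).trans (by linarith)
      have h4 : |f-g| * |f+g| ≤ (ε*C)*(2*C) :=
        mul_le_mul hfg h3 (abs_nonneg _) (by positivity)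
      nlinarith [h2', h4]
    have hi1 := hInt A t' (t'+T) ht'0 (by linarith)
    have hi2 := hInt (αs n) t' (t'+T) ht'0 (by linarith)
    have hmono := intervalIntegral.integral_mono_on (by linarith : t' ≤ t'+T) hi1
      (hi2.add intervalIntegrable_const) hpt
    have hadd : (∫ τ in t'..(t'+T), ((inner ℝ (αs n) (v τ) : ℝ)^2 + 2*C^2*ε))
        = (∫ τ in t'..(t'+T), (inner ℝ (αs n) (v τ) : ℝ)^2) + T*(2*C^2*ε) := by
      rw [intervalIntegral.integral_add hi2 intervalIntegrable_const,
        intervalIntegral.integral_const]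
      simp [smul_eq_mul]; try ring
    have hfinal1 : (1/T)*(1/(m:ℝ)) < β/2 := by
      have h2m : 2 < (m:ℝ) * (β*T) := by
        have h22 : 2/(β*T) < (m:ℝ) := by linarith
        exact (div_lt_iff₀ (by positivity)).mp h22
      rw [div_mul_div_comm, one_mul, div_lt_div_iff₀ (by positivity) two_pos]
      nlinarith
    have hfinal2 : 2*C^2*ε < β/2 := by
      have hD : (0:ℝ) < 2*(2*C^2+1) := by positivity
      have heq2 : 2*C^2*ε = (2*C^2*β)/(2*(2*C^2+1)) := by rw [hε]; ring
      rw [heq2, div_lt_div_iff₀ hD two_pos]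
      nlinarith
    have hTi : (0:ℝ) < 1/T := by positivity
    have hup : (1/T) * (∫ τ in t'..(t'+T), (inner ℝ A (v τ) : ℝ)^2) < β := by
      have hstep1 : (1/T) * (∫ τ in t'..(t'+T), (inner ℝ A (v τ) : ℝ)^2)
          ≤ (1/T) * ((∫ τ in t'..(t'+T), (inner ℝ (αs n) (v τ) : ℝ)^2) + T*(2*C^2*ε)) := by
        apply mul_le_mul_of_nonneg_left _ hTi.le
        rw [← hadd]; exact hmono
      have hTT : (1/T) * T = 1 := by field_simp
      have hstep2 : (1/T) * ((∫ τ in t'..(t'+T), (inner ℝ (αs n) (v τ) : ℝ)^2) + T*(2*C^2*ε))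
          < (1/T)*(1/(m:ℝ)) + 2*C^2*ε := by
        have : (1/T) * ((∫ τ in t'..(t'+T), (inner ℝ (αs n) (v τ) : ℝ)^2) + T*(2*C^2*ε))
            = (1/T)*(∫ τ in t'..(t'+T), (inner ℝ (αs n) (v τ) : ℝ)^2) + ((1/T)*T)*(2*C^2*ε) := by
          ring
        rw [this, hTT, one_mul]
        have := mul_lt_mul_of_pos_left hjint hTi
        linarith
      linarith
    linarith
  -- transfer to the stacked regressor and use the subspace structure
  have hfun2 : (fun s : ℝ => (inner ℝ ((WithLp.equiv 2
        (EuclideanSpace ℝ (Fin q1) × EuclideanSpace ℝ (Fin q1))).symm (A, A)) (w s) : ℝ))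
      = fun s => (inner ℝ A (v s) : ℝ) := by
    funext s; rw [hw s]
    simp [WithLp.prod_inner_apply, hvdef, inner_add_right]
  have hfun1 : (fun s : ℝ => (inner ℝ ((WithLp.equiv 2
        (EuclideanSpace ℝ (Fin q1) × EuclideanSpace ℝ (Fin q1))).symm (A, (0:EuclideanSpace ℝ (Fin q1)))) (w s) : ℝ))
      = fun s => (inner ℝ A (w1 s) : ℝ) := by
    funext s; rw [hw s]
    simp [WithLp.prod_inner_apply]
  have hfun0 : (fun s : ℝ => (inner ℝ ((WithLp.equiv 2
        (EuclideanSpace ℝ (Fin q1) × EuclideanSpace ℝ (Fin q1))).symm ((0:EuclideanSpace ℝ (Fin q1)), A)) (w s) : ℝ))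
      = fun s => (inner ℝ A (w2 s) : ℝ) := by
    funext s; rw [hw s]
    simp [WithLp.prod_inner_apply]
  have hmem2 : ((WithLp.equiv 2
      (EuclideanSpace ℝ (Fin q1) × EuclideanSpace ℝ (Fin q1))).symm (A, A)) ∈ S := by
    rw [← SetLike.mem_coe, hS]
    show ¬ ScalarPE _
    rw [hfun2]; exact hnotPE
  have hmem1 : ((WithLp.equiv 2
      (EuclideanSpace ℝ (Fin q1) × EuclideanSpace ℝ (Fin q1))).symm (A, (0:EuclideanSpace ℝ (Fin q1)))) ∈ S := by
    rw [← SetLike.mem_coe, hS]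
    show ¬ ScalarPE _
    rw [hfun1]; exact h1 A
  have heq : ((WithLp.equiv 2
        (EuclideanSpace ℝ (Fin q1) × EuclideanSpace ℝ (Fin q1))).symm (A, A))
      - ((WithLp.equiv 2 _).symm (A, (0:EuclideanSpace ℝ (Fin q1))))
      = (WithLp.equiv 2 _).symm ((0:EuclideanSpace ℝ (Fin q1)), A) := by
    simp [← WithLp.toLp_sub]
  have hmem3 := heq ▸ S.sub_mem hmem2 hmem1
  have hnot2 : ¬ ScalarPE (fun s => (inner ℝ A (w2 s) : ℝ)) := by
    have hmem4 : ((WithLp.equiv 2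
        (EuclideanSpace ℝ (Fin q1) × EuclideanSpace ℝ (Fin q1))).symm ((0:EuclideanSpace ℝ (Fin q1)), A)) ∈ nonPESet w := by
      rw [← hS]; exact_mod_cast hmem3
    simp only [nonPESet, Set.mem_setOf_eq] at hmem4
    rw [hfun0] at hmem4; exact hmem4
  obtain ⟨β₂, T₂, hβ₂, hT₂, hPE₂⟩ := h2
  exact hnot2 ⟨β₂, T₂, hβ₂, hT₂, fun t ht => by simpa [hA1] using hPE₂ t ht A⟩
end
end

section
/- (PE decomposition) Let w : ℝ → ℝ^q be a regular regressor, let 𝒲 := (𝒲*)^⊥ be its PE subspace with q_pe := dim 𝒲, and let 𝒱 be any subspace with 𝒲 ⊕ 𝒱 = ℝ^q. Let U_𝒲 : ℝ^{q_pe} → ℝ^q be an injective linear map with range 𝒲 and D_𝒱 : ℝ^q → ℝ^{q_pe} a linear map with kernel 𝒱 satisfying D_𝒱 ∘ U_𝒲 = id, and let U_𝒱 : ℝ^{q−q_pe} → ℝ^q be an injective linear map with range 𝒱 and D_𝒲 : ℝ^q → ℝ^{q−q_pe} a linear map with kernel 𝒲 satisfying D_𝒲 ∘ U_𝒱 = id.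 Then w(t) = U_𝒲(w_pe(t)) + U_𝒱(w_⊥(t)) for all t, where w_pe := D_𝒱 ∘ w is persistently exciting and w_⊥ := D_𝒲 ∘ w is non-PE. -/
open MeasureTheory Filter
open scoped Classical

noncomputable section

-- integrability of a bounded-on-[0,∞) measurable function squared on [a,b], 0 ≤ a ≤ b
lemma sq_intInt (u : ℝ → ℝ) (hu : Measurable u) (C : ℝ)
    (hC : ∀ t : ℝ, 0 ≤ t → |u t| ≤ C) {a b : ℝ} (ha : 0 ≤ a) (hab : a ≤ b) :
    IntervalIntegrable (fun τ => (u τ) ^ 2) volume a b := by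
  rw [intervalIntegrable_iff_integrableOn_Ioc_of_le hab]
  apply Integrable.mono' (g := fun _ => C ^ 2)
  · exact integrableOn_const measure_Ioc_lt_top.ne
  · exact ((hu.pow_const 2).aestronglyMeasurable).restrict
  · filter_upwards [ae_restrict_mem measurableSet_Ioc] with τ hτ
    have h0 : (0:ℝ) ≤ τ := le_of_lt (lt_of_le_of_lt ha hτ.1)
    have := hC τ h0
    have : u τ ^ 2 ≤ C ^ 2 := by
      have := sq_abs (u τ) ▸ pow_le_pow_left₀ (abs_nonneg _) this 2
      simpa [sq_abs] using this
    rw [Real.norm_eq_abs, abs_of_nonneg (sq_nonneg _)]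
    exact this

lemma block_lemma (u : ℝ → ℝ) (hu : Measurable u) (C : ℝ)
    (hC : ∀ t : ℝ, 0 ≤ t → |u t| ≤ C)
    {c T : ℝ} (hT : 0 < T)
    (h : ∀ t : ℝ, 0 ≤ t → c ≤ ∫ τ in t..(t + T), (u τ) ^ 2) :
    ∀ n : ℕ, ∀ t : ℝ, 0 ≤ t → (n : ℝ) * c ≤ ∫ τ in t..(t + n * T), (u τ) ^ 2 := by
  intro n
  induction n with
  | zero => intro t ht; simp
  | succ n ih =>
    intro t ht
    have h1 : t ≤ t + n * T := by nlinarith [Nat.cast_nonneg (α:=ℝ) n]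
    have h2 : t + n * T ≤ t + (n+1) * T := by nlinarith
    have i1 : IntervalIntegrable (fun τ => (u τ) ^ 2) volume t (t + n * T) :=
      sq_intInt u hu C hC ht h1
    have i2 : IntervalIntegrable (fun τ => (u τ) ^ 2) volume (t + n * T) (t + (n+1) * T) :=
      sq_intInt u hu C hC (le_trans ht h1) h2
    have hadd := intervalIntegral.integral_add_adjacent_intervals i1 i2
    have key : c ≤ ∫ τ in (t + n*T)..(t + (n+1) * T), (u τ) ^ 2 := by
      have := h (t + n * T) (le_trans ht h1)
      have he : t + ↑n * T + T = t + (↑n + 1) * T := by ring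
      rw [he] at this
      convert this using 3 <;> push_cast <;> ring
    have := ih t ht
    push_cast
    calc ((n:ℝ) + 1) * c = (n:ℝ)*c + c := by ring
    _ ≤ (∫ τ in t..(t + n * T), (u τ) ^ 2) + ∫ τ in (t + n*T)..(t + (n+1) * T), (u τ) ^ 2 :=
        add_le_add this key
    _ = ∫ τ in t..(t + (n+1) * T), (u τ) ^ 2 := by
        rw [hadd]

lemma extend_lemma (u : ℝ → ℝ) (hu : Measurable u) (C : ℝ)
    (hC : ∀ t : ℝ, 0 ≤ t → |u t| ≤ C)
    {β T T' : ℝ} (hβ : 0 < β) (hT : 0 < T) (hT' : 2 * T ≤ T')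
    (h : ∀ t : ℝ, 0 ≤ t → β * T ≤ ∫ τ in t..(t + T), (u τ) ^ 2) :
    ∀ t : ℝ, 0 ≤ t → β / 2 * T' ≤ ∫ τ in t..(t + T'), (u τ) ^ 2 := by
  intro t ht
  set n : ℕ := ⌊T' / T⌋₊ with hn
  have hT'pos : 0 < T' := by linarith
  have hd : (0:ℝ) ≤ T' / T := by positivity
  have hn1 : (n : ℝ) * T ≤ T' := by
    have h := Nat.floor_le hd
    rw [← hn] at h
    calc (n:ℝ) * T ≤ (T'/T) * T := by nlinarith
    _ = T' := by field_simp
  have hn2 : T' / T < (n : ℝ) + 1 := Nat.lt_floor_add_one _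
  have hnlow : T' / (2 * T) ≤ (n : ℝ) := by
    have h2 : 2 ≤ T' / T := by rw [le_div_iff₀ hT]; linarith
    have : T' / T - 1 ≤ (n:ℝ) := by linarith
    calc T' / (2*T) = (T'/T)/2 := by rw [div_div]; ring_nf
    _ ≤ T'/T - 1 := by linarith
    _ ≤ (n:ℝ) := this
  have hblock := block_lemma u hu C hC hT h n t ht
  have h1 : t ≤ t + n * T := by nlinarith [Nat.cast_nonneg (α:=ℝ) n]
  have h2 : t + n * T ≤ t + T' := by linarith
  have i1 : IntervalIntegrable (fun τ => (u τ) ^ 2) volume t (t + n * T) :=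
    sq_intInt u hu C hC ht h1
  have i2 : IntervalIntegrable (fun τ => (u τ) ^ 2) volume (t + n * T) (t + T') :=
    sq_intInt u hu C hC (le_trans ht h1) h2
  have hadd := intervalIntegral.integral_add_adjacent_intervals i1 i2
  have htail : 0 ≤ ∫ τ in (t + n*T)..(t + T'), (u τ) ^ 2 :=
    intervalIntegral.integral_nonneg h2 (fun x _ => sq_nonneg _)
  have : (n : ℝ) * (β * T) ≤ ∫ τ in t..(t + T'), (u τ) ^ 2 := by
    rw [← hadd]; linarith
  calc β / 2 * T' = (T' / (2*T)) * (β * T) := by field_simp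
  _ ≤ (n : ℝ) * (β * T) := by
      apply mul_le_mul_of_nonneg_right hnlow (by positivity)
  _ ≤ _ := this

lemma uniformPE {m : ℕ} (v : ℝ → EuclideanSpace ℝ (Fin m)) (hv : Measurable v)
    (K : ℝ) (hK : ∀ t : ℝ, 0 ≤ t → ‖v t‖ ≤ K)
    (hall : ∀ α : EuclideanSpace ℝ (Fin m), ‖α‖ = 1 →
      ScalarPE (fun t => (inner ℝ α (v t) : ℝ))) :
    RegressorPE v := by
  classical
  by_cases hm : ∀ α : EuclideanSpace ℝ (Fin m), α = 0
  · refine ⟨1, 1, one_pos, one_pos, fun t ht α => ?_⟩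
    rw [hm α]
    simp
  -- setup
  have hK0 : 0 ≤ K := le_trans (norm_nonneg _) (hK 0 le_rfl)
  have humeas : ∀ α : EuclideanSpace ℝ (Fin m),
      Measurable (fun t => (inner ℝ α (v t) : ℝ)) := fun α =>
    ((continuous_const.inner continuous_id).measurable).comp hv
  have hubnd : ∀ (α : EuclideanSpace ℝ (Fin m)) (t : ℝ), 0 ≤ t →
      |(inner ℝ α (v t) : ℝ)| ≤ ‖α‖ * K := by
    intro α t ht
    calc |(inner ℝ α (v t) : ℝ)| ≤ ‖α‖ * ‖v t‖ := abs_real_inner_le_norm _ _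
    _ ≤ ‖α‖ * K := mul_le_mul_of_nonneg_left (hK t ht) (norm_nonneg _)
  set Sp := Metric.sphere (0 : EuclideanSpace ℝ (Fin m)) 1 with hSp
  have hsnorm : ∀ i : Sp, ‖(i : EuclideanSpace ℝ (Fin m))‖ = 1 := by
    intro i; have := i.2; rwa [mem_sphere_zero_iff_norm] at this
  have hPE : ∀ i : Sp, ∃ β T : ℝ, 0 < β ∧ 0 < T ∧
      ∀ t : ℝ, 0 ≤ t → β * T ≤ ∫ τ in t..(t + T),
        (inner ℝ (i : EuclideanSpace ℝ (Fin m)) (v τ) : ℝ) ^ 2 := by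
    intro i
    obtain ⟨β, T, hβ, hT, h⟩ := hall i.1 (hsnorm i)
    refine ⟨β, T, hβ, hT, fun t ht => ?_⟩
    have := h t ht
    rw [one_div, inv_mul_eq_div, le_div_iff₀ hT] at this
    linarith
  choose βf Tf hβf hTf hIf using hPE
  set E2 : ℝ := 2 * K ^ 2 with hE2
  have hE2nn : 0 ≤ E2 := by positivity
  set r : Sp → ℝ := fun i => βf i / (2 * (E2 + 1)) with hr
  have hrpos : ∀ i, 0 < r i := fun i => by
    have := hβf i; rw [hr]; positivity
  -- ball property
  have hball : ∀ (i : Sp) (α : EuclideanSpace ℝ (Fin m)), ‖α‖ = 1 →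
      α ∈ Metric.ball (i : EuclideanSpace ℝ (Fin m)) (r i) →
      ∀ t : ℝ, 0 ≤ t → (βf i / 2) * Tf i ≤ ∫ τ in t..(t + Tf i),
        (inner ℝ α (v τ) : ℝ) ^ 2 := by
    intro i α hα hmem t ht
    have hTi := hTf i
    have hβi := hβf i
    have hdist : ‖(i : EuclideanSpace ℝ (Fin m)) - α‖ < r i := by
      rw [Metric.mem_ball, dist_eq_norm] at hmem
      rwa [← norm_neg, neg_sub] at hmem
    have hbi : ∀ τ : ℝ, 0 ≤ τ → |(inner ℝ (i : EuclideanSpace ℝ (Fin m)) (v τ) : ℝ)| ≤ K := by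
      intro τ hτ; have := hubnd i.1 τ hτ; rwa [hsnorm i, one_mul] at this
    have hbα : ∀ τ : ℝ, 0 ≤ τ → |(inner ℝ α (v τ) : ℝ)| ≤ K := by
      intro τ hτ; have := hubnd α τ hτ; rwa [hα, one_mul] at this
    have hab : t ≤ t + Tf i := by linarith
    have i1 : IntervalIntegrable
        (fun τ => (inner ℝ (i : EuclideanSpace ℝ (Fin m)) (v τ) : ℝ) ^ 2) volume t (t + Tf i) :=
      sq_intInt _ (humeas i.1) K hbi ht hab
    have i2 : IntervalIntegrable (fun τ => (inner ℝ α (v τ) : ℝ) ^ 2) volume t (t + Tf i) :=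
      sq_intInt _ (humeas α) K hbα ht hab
    have hdiff : ‖∫ τ in t..(t + Tf i),
        ((inner ℝ (i : EuclideanSpace ℝ (Fin m)) (v τ) : ℝ) ^ 2 - (inner ℝ α (v τ) : ℝ) ^ 2)‖
        ≤ (E2 * r i) * |(t + Tf i) - t| := by
      apply intervalIntegral.norm_integral_le_of_norm_le_const
      intro x hx
      rw [Set.uIoc_of_le hab] at hx
      have hx0 : 0 ≤ x := le_trans ht (le_of_lt hx.1)
      have key : (inner ℝ (i : EuclideanSpace ℝ (Fin m)) (v x) : ℝ) ^ 2
          - (inner ℝ α (v x) : ℝ) ^ 2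
          = (inner ℝ ((i : EuclideanSpace ℝ (Fin m)) - α) (v x) : ℝ)
          * ((inner ℝ (i : EuclideanSpace ℝ (Fin m)) (v x) : ℝ) + (inner ℝ α (v x) : ℝ)) := by
        rw [inner_sub_left]; ring
      rw [Real.norm_eq_abs, key, abs_mul]
      have h1 : |(inner ℝ ((i : EuclideanSpace ℝ (Fin m)) - α) (v x) : ℝ)| ≤ r i * K := by
        calc _ ≤ ‖(i : EuclideanSpace ℝ (Fin m)) - α‖ * ‖v x‖ := abs_real_inner_le_norm _ _
        _ ≤ r i * K := by
            apply mul_le_mul (le_of_lt hdist) (hK x hx0) (norm_nonneg _) (le_of_lt (hrpos i))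
      have h2 : |(inner ℝ (i : EuclideanSpace ℝ (Fin m)) (v x) : ℝ) + (inner ℝ α (v x) : ℝ)|
          ≤ 2 * K := by
        calc _ ≤ |(inner ℝ (i : EuclideanSpace ℝ (Fin m)) (v x) : ℝ)| + |(inner ℝ α (v x) : ℝ)| :=
              abs_add_le _ _
        _ ≤ 2 * K := by have := hbi x hx0; have := hbα x hx0; linarith
      calc |(inner ℝ ((i : EuclideanSpace ℝ (Fin m)) - α) (v x) : ℝ)|
            * |(inner ℝ (i : EuclideanSpace ℝ (Fin m)) (v x) : ℝ) + (inner ℝ α (v x) : ℝ)|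
          ≤ (r i * K) * (2 * K) := by
            apply mul_le_mul h1 h2 (abs_nonneg _) (by positivity)
      _ = E2 * r i := by rw [hE2]; ring
    have hsub : (∫ τ in t..(t + Tf i),
        (inner ℝ (i : EuclideanSpace ℝ (Fin m)) (v τ) : ℝ) ^ 2)
        - (∫ τ in t..(t + Tf i), (inner ℝ α (v τ) : ℝ) ^ 2)
        = ∫ τ in t..(t + Tf i),
        ((inner ℝ (i : EuclideanSpace ℝ (Fin m)) (v τ) : ℝ) ^ 2 - (inner ℝ α (v τ) : ℝ) ^ 2) :=
      (intervalIntegral.integral_sub i1 i2).symm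
    have habs : |(t + Tf i) - t| = Tf i := by
      rw [add_sub_cancel_left, abs_of_pos hTi]
    rw [habs] at hdiff
    rw [Real.norm_eq_abs] at hdiff
    have hlow := hIf i t ht
    have hEr : E2 * r i ≤ βf i / 2 := by
      have h1 : r i = βf i / (2 * (E2 + 1)) := rfl
      rw [h1, ← mul_div_assoc, div_le_div_iff₀ (by positivity) (by norm_num : (0:ℝ) < 2)]
      nlinarith [hE2nn, hβf i]
    have hd2 := abs_le.1 hdiff
    nlinarith [hd2.1, hd2.2, hTi]
  -- cover the sphere
  have hcover : Sp ⊆ ⋃ i : Sp, Metric.ball (i : EuclideanSpace ℝ (Fin m)) (r i) := by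
    intro x hx
    exact Set.mem_iUnion.2 ⟨⟨x, hx⟩, Metric.mem_ball_self (hrpos ⟨x, hx⟩)⟩
  obtain ⟨s, hs⟩ := (isCompact_sphere (0 : EuclideanSpace ℝ (Fin m)) 1).elim_finite_subcover
    (fun i : Sp => Metric.ball (i : EuclideanSpace ℝ (Fin m)) (r i))
    (fun i => Metric.isOpen_ball) hcover
  push_neg at hm
  obtain ⟨α₀, hα₀⟩ := hm
  have hxs : ∀ x : EuclideanSpace ℝ (Fin m), ‖x‖ = 1 →
      ∃ i ∈ s, x ∈ Metric.ball (i : EuclideanSpace ℝ (Fin m)) (r i) := by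
    intro x hx
    have : x ∈ Sp := by rw [hSp, mem_sphere_zero_iff_norm]; exact hx
    have := hs this
    rw [Set.mem_iUnion₂] at this
    obtain ⟨i, hi, hmem⟩ := this
    exact ⟨i, hi, hmem⟩
  have hsne : s.Nonempty := by
    set x := ‖α₀‖⁻¹ • α₀ with hx
    have hxn : ‖x‖ = 1 := by
      rw [hx, norm_smul, norm_inv, norm_norm, inv_mul_cancel₀ (norm_ne_zero_iff.2 hα₀)]
    obtain ⟨i, hi, _⟩ := hxs x hxn
    exact ⟨i, hi⟩
  set T : ℝ := 2 * s.sup' hsne Tf with hT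
  set β : ℝ := (s.inf' hsne βf) / 4 with hβ
  have hTpos : 0 < T := by
    rw [hT]
    have : 0 < s.sup' hsne Tf := by
      obtain ⟨i, hi⟩ := hsne
      exact lt_of_lt_of_le (hTf i) (Finset.le_sup' Tf hi)
    linarith
  have hβpos : 0 < β := by
    rw [hβ]
    have : 0 < s.inf' hsne βf := by
      rw [Finset.lt_inf'_iff]
      exact fun i _ => hβf i
    linarith
  refine ⟨β, T, hβpos, hTpos, fun t ht α => ?_⟩
  by_cases hα : α = 0
  · subst hα; simp
  · set a : EuclideanSpace ℝ (Fin m) := ‖α‖⁻¹ • α with ha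
    have hna : ‖a‖ = 1 := by
      rw [ha, norm_smul, norm_inv, norm_norm, inv_mul_cancel₀ (norm_ne_zero_iff.2 hα)]
    obtain ⟨i, hi, hmem⟩ := hxs a hna
    have hba : ∀ τ : ℝ, 0 ≤ τ → |(inner ℝ a (v τ) : ℝ)| ≤ K := by
      intro τ hτ; have := hubnd a τ hτ; rwa [hna, one_mul] at this
    have hTle : 2 * Tf i ≤ T := by
      rw [hT]
      have := Finset.le_sup' Tf hi
      linarith
    have hext := extend_lemma (fun τ => (inner ℝ a (v τ) : ℝ)) (humeas a) K hba
      (half_pos (hβf i)) (hTf i) hTle (hball i a hna hmem) t ht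
    -- hext : βf i / 2 / 2 * T ≤ ∫ τ in t..t+T, (inner ℝ a (v τ))^2
    have hscale : ∀ τ : ℝ, (inner ℝ α (v τ) : ℝ) ^ 2 = ‖α‖ ^ 2 * (inner ℝ a (v τ) : ℝ) ^ 2 := by
      intro τ
      have : α = ‖α‖ • a := by
        rw [ha, smul_smul, mul_inv_cancel₀ (norm_ne_zero_iff.2 hα), one_smul]
      have hinner : (inner ℝ α (v τ) : ℝ) = ‖α‖ * (inner ℝ a (v τ) : ℝ) := by
        conv_lhs => rw [this]
        exact real_inner_smul_left _ _ _
      rw [hinner]; ring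
    have hIeq : (∫ τ in t..(t + T), (inner ℝ α (v τ) : ℝ) ^ 2)
        = ‖α‖ ^ 2 * ∫ τ in t..(t + T), (inner ℝ a (v τ) : ℝ) ^ 2 := by
      simp_rw [hscale]
      exact intervalIntegral.integral_const_mul _ _
    rw [hIeq]
    have hβle : β ≤ βf i / 4 := by
      rw [hβ]
      have := Finset.inf'_le βf hi
      linarith
    have h4 : βf i / 4 * T ≤ ∫ τ in t..(t + T), (inner ℝ a (v τ) : ℝ) ^ 2 := by
      have : βf i / 2 / 2 = βf i / 4 := by ring
      rwa [this] at hext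
    have hIa : β * T ≤ ∫ τ in t..(t + T), (inner ℝ a (v τ) : ℝ) ^ 2 := by
      calc β * T ≤ βf i / 4 * T := mul_le_mul_of_nonneg_right hβle (le_of_lt hTpos)
      _ ≤ _ := h4
    rw [one_div, ← mul_assoc, mul_comm T⁻¹, mul_assoc]
    rw [mul_comm β]
    apply mul_le_mul_of_nonneg_left _ (sq_nonneg ‖α‖)
    rw [inv_mul_eq_div, le_div_iff₀ hTpos]
    exact hIa

theorem stmt9 {q qpe : ℕ} (w : ℝ → EuclideanSpace ℝ (Fin q))
    (hmeas : Measurable w) (hloc : LocallyIntegrable w volume)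
    (hbdd : ∃ M : ℝ, ∀ t : ℝ, 0 ≤ t → ‖w t‖ ≤ M)
    (S : Submodule ℝ (EuclideanSpace ℝ (Fin q)))
    (hS : (S : Set (EuclideanSpace ℝ (Fin q))) = nonPESet w)
    (hqpe : qpe = Module.finrank ℝ Sᗮ)
    (V : Submodule ℝ (EuclideanSpace ℝ (Fin q)))
    (hinf : Sᗮ ⊓ V = ⊥) (hsup : Sᗮ ⊔ V = ⊤)
    (UW : EuclideanSpace ℝ (Fin qpe) →ₗ[ℝ] EuclideanSpace ℝ (Fin q))
    (hUWinj : Function.Injective UW) (hUWrange : LinearMap.range UW = Sᗮ)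
    (DV : EuclideanSpace ℝ (Fin q) →ₗ[ℝ] EuclideanSpace ℝ (Fin qpe))
    (hDVker : LinearMap.ker DV = V) (hDVUW : DV ∘ₗ UW = LinearMap.id)
    (UV : EuclideanSpace ℝ (Fin (q - qpe)) →ₗ[ℝ] EuclideanSpace ℝ (Fin q))
    (hUVinj : Function.Injective UV) (hUVrange : LinearMap.range UV = V)
    (DW : EuclideanSpace ℝ (Fin q) →ₗ[ℝ] EuclideanSpace ℝ (Fin (q - qpe)))
    (hDWker : LinearMap.ker DW = Sᗮ) (hDWUV : DW ∘ₗ UV = LinearMap.id) :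
    (∀ t : ℝ, w t = UW (DV (w t)) + UV (DW (w t))) ∧
    RegressorPE (fun t => DV (w t)) ∧
    NonPE (fun t => DW (w t)) := by
  obtain ⟨M, hM⟩ := hbdd
  have hM0 : 0 ≤ M := le_trans (norm_nonneg _) (hM 0 le_rfl)
  -- decomposition of vectors
  have hdecomp : ∀ x : EuclideanSpace ℝ (Fin q), x = UW (DV x) + UV (DW x) := by
    intro x
    have hx : x ∈ Sᗮ ⊔ V := by rw [hsup]; trivial
    obtain ⟨y, hy, z, hz, hyz⟩ := Submodule.mem_sup.1 hx
    have hy' : y ∈ LinearMap.range UW := by rw [hUWrange]; exact hy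
    have hz' : z ∈ LinearMap.range UV := by rw [hUVrange]; exact hz
    obtain ⟨a, ha⟩ := hy'
    obtain ⟨b, hb⟩ := hz'
    have hDVz : DV z = 0 := by rw [← LinearMap.mem_ker, hDVker]; exact hz
    have hDWy : DW y = 0 := by rw [← LinearMap.mem_ker, hDWker]; exact hy
    have h1 : DV x = a := by
      rw [← hyz, map_add, hDVz, add_zero, ← ha]
      have := LinearMap.ext_iff.1 hDVUW a
      simpa using this
    have h2 : DW x = b := by
      rw [← hyz, map_add, hDWy, zero_add, ← hb]
      have := LinearMap.ext_iff.1 hDWUV b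
      simpa using this
    rw [h1, h2, ha, hb, hyz]
  refine ⟨fun t => hdecomp (w t), ?_, ?_⟩
  · -- PE part
    set B := LinearMap.adjoint DV with hB
    have hSVbot : ∀ x : EuclideanSpace ℝ (Fin q), x ∈ S → x ∈ Vᗮ → x = 0 := by
      intro x hxS hxV
      have hx : x ∈ Sᗮ ⊔ V := by rw [hsup]; trivial
      obtain ⟨y, hy, z, hz, hyz⟩ := Submodule.mem_sup.1 hx
      have h1 : (inner ℝ x y : ℝ) = 0 := (Submodule.mem_orthogonal S y).1 hy x hxS
      have h2 : (inner ℝ x z : ℝ) = 0 := by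
        rw [real_inner_comm]; exact (Submodule.mem_orthogonal V x).1 hxV z hz
      have h3 : (inner ℝ x x : ℝ) = 0 := by
        nth_rewrite 2 [← hyz]
        rw [inner_add_right, h1, h2, add_zero]
      exact inner_self_eq_zero.1 h3
    have hBmem : ∀ α : EuclideanSpace ℝ (Fin qpe), B α ∈ Vᗮ := by
      intro α
      rw [Submodule.mem_orthogonal]
      intro u hu
      have h0 : DV u = 0 := by rw [← LinearMap.mem_ker, hDVker]; exact hu
      rw [real_inner_comm, hB, LinearMap.adjoint_inner_left, h0, inner_zero_right]
    have hBne : ∀ α : EuclideanSpace ℝ (Fin qpe), α ≠ 0 → B α ≠ 0 := by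
      intro α hα h0
      apply hα
      have h1 : DV (UW α) = α := by simpa using LinearMap.ext_iff.1 hDVUW α
      have h2 : (inner ℝ α α : ℝ) = 0 := by
        calc (inner ℝ α α : ℝ) = inner ℝ α (DV (UW α)) := by rw [h1]
        _ = inner ℝ (B α) (UW α) := by rw [hB, LinearMap.adjoint_inner_left]
        _ = 0 := by rw [h0, inner_zero_left]
      exact inner_self_eq_zero.1 h2
    have hDVc : Continuous DV := DV.continuous_of_finiteDimensional
    set DVL := LinearMap.toContinuousLinearMap DV with hDVL
    apply uniformPE _ (hDVc.measurable.comp hmeas) (‖DVL‖ * M)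
    · intro t ht
      calc ‖DV (w t)‖ = ‖DVL (w t)‖ := rfl
      _ ≤ ‖DVL‖ * ‖w t‖ := DVL.le_opNorm _
      _ ≤ ‖DVL‖ * M := mul_le_mul_of_nonneg_left (hM t ht) (norm_nonneg _)
    · intro α hα
      have hfun : (fun t => (inner ℝ α (DV (w t)) : ℝ))
          = fun t => (inner ℝ (B α) (w t) : ℝ) := by
        funext t
        rw [hB, LinearMap.adjoint_inner_left]
      have hne : B α ≠ 0 := by
        apply hBne
        intro h; rw [h] at hα; simp at hα
      have hnotS : B α ∉ S := fun hc => hne (hSVbot _ hc (hBmem α))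
      have hpe : ScalarPE (fun t => (inner ℝ (B α) (w t) : ℝ)) := by
        by_contra hcon
        exact hnotS (by rw [← SetLike.mem_coe, hS]; exact hcon)
      show ScalarPE fun t => (inner ℝ α (DV (w t)) : ℝ)
      rw [hfun]
      exact hpe
  · -- non-PE part
    intro α
    have hmem : LinearMap.adjoint DW α ∈ S := by
      rw [← Submodule.orthogonal_orthogonal S]
      intro u hu
      have h0 : DW u = 0 := by rw [← LinearMap.mem_ker, hDWker]; exact hu
      rw [real_inner_comm, LinearMap.adjoint_inner_left, h0, inner_zero_right]
    have : LinearMap.adjoint DW α ∈ nonPESet w := by rw [← hS]; exact hmem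
    have hfun : (fun t => (inner ℝ α (DW (w t)) : ℝ))
        = fun t => (inner ℝ (LinearMap.adjoint DW α) (w t) : ℝ) := by
      funext t
      rw [LinearMap.adjoint_inner_left]
    rw [hfun]
    exact this
end
end

section
/- Let w : ℝ → ℝ^q be a regular regressor with PE subspace 𝒲 := (𝒲*)^⊥, and let L : ℝ^q → ℝ^p be a linear map. Then the PE subspace of the regressor t ↦ L(w(t)) is the image L(𝒲); equivalently, the non-PE set of L∘w equals the orthogonal complement (L𝒲)^⊥ in ℝ^p. -/
open MeasureTheory Filter
open scoped Classical

noncomputable section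

theorem stmt10 {q p : ℕ} (w : ℝ → EuclideanSpace ℝ (Fin q))
    (hmeas : Measurable w) (hloc : LocallyIntegrable w volume)
    (hbdd : ∃ M : ℝ, ∀ t : ℝ, 0 ≤ t → ‖w t‖ ≤ M)
    (S : Submodule ℝ (EuclideanSpace ℝ (Fin q)))
    (hS : (S : Set (EuclideanSpace ℝ (Fin q))) = nonPESet w)
    (L : EuclideanSpace ℝ (Fin q) →ₗ[ℝ] EuclideanSpace ℝ (Fin p)) :
    nonPESet (fun t => L (w t)) =
      (((Sᗮ.map L)ᗮ : Submodule ℝ (EuclideanSpace ℝ (Fin p))) :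
        Set (EuclideanSpace ℝ (Fin p))) := by
  ext α
  have h1 : ∀ t : ℝ, (inner ℝ α (L (w t)) : ℝ) = inner ℝ (LinearMap.adjoint L α) (w t) := by
    intro t; rw [LinearMap.adjoint_inner_left]
  have hmemS : (LinearMap.adjoint L α ∈ S) ↔
      ¬ ScalarPE (fun t => (inner ℝ (LinearMap.adjoint L α) (w t) : ℝ)) := by
    rw [← SetLike.mem_coe, hS]; rfl
  simp only [nonPESet, Set.mem_setOf_eq, SetLike.mem_coe]
  constructor
  · intro h
    rw [Submodule.mem_orthogonal]
    rintro u hu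
    obtain ⟨v, hv, rfl⟩ := hu
    have hmem : LinearMap.adjoint L α ∈ S := by
      rw [hmemS]; simpa only [h1] using h
    rw [real_inner_comm, ← LinearMap.adjoint_inner_left]
    rw [real_inner_comm]
    exact (Submodule.mem_orthogonal Sᗮ _).mp
      (by rw [Submodule.orthogonal_orthogonal]; exact hmem) v hv
  · intro h
    have hmem : LinearMap.adjoint L α ∈ S := by
      rw [← Submodule.orthogonal_orthogonal S, Submodule.mem_orthogonal]
      intro v hv
      have := (Submodule.mem_orthogonal _ α).mp h (L v) ⟨v, hv, rfl⟩
      rw [real_inner_comm, LinearMap.adjoint_inner_left, real_inner_comm]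
      exact this
    rw [hmemS] at hmem
    simpa only [h1] using hmem
end
end

section
/- (Uniqueness of the PE subspace) Let w : ℝ → ℝ^q be a regular regressor with PE subspace 𝒲 := (𝒲*)^⊥. Let 𝒲∘ ⊆ ℝ^q be a subspace with the property that for every subspace 𝒱∘ with 𝒲∘ ⊕ 𝒱∘ = ℝ^q and every choice of projection pairs (U_{𝒲∘}, D_{𝒱∘}) and (U_{𝒱∘}, D_{𝒲∘}) — i.e., U_{𝒲∘} injective linear with range 𝒲∘, D_{𝒱∘} linear with kernel 𝒱∘ and D_{𝒱∘} ∘ U_{𝒲∘} = id, and U_{𝒱∘} injective linear with range 𝒱∘, D_{𝒲∘} linear with kernel 𝒲∘ and D_{𝒲∘} ∘ U_{𝒱∘} = id — the signal w₁ := D_{𝒱∘} ∘ w is persistently exciting and the signal w₂ := D_{𝒲∘} ∘ w is non-PE. Then 𝒲∘ = 𝒲. -/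
open MeasureTheory Filter
open scoped Classical

noncomputable section

/-- Auxiliary: projecting onto a subspace and reading off coordinates in an orthonormal
basis computes the inner product with the original vector, for vectors in the subspace. -/
lemma stmt11_aux_inner {E : Type*} [NormedAddCommGroup E] [InnerProductSpace ℝ E]
    [FiniteDimensional ℝ E] {K : Submodule ℝ E} {ι : Type*} [Fintype ι]
    (b : OrthonormalBasis ι ℝ K) {v : E} (hv : v ∈ K) (x : E) :
    (inner ℝ (b.repr ⟨v, hv⟩) (b.repr (Submodule.orthogonalProjectionOnto K x)) : ℝ) = inner ℝ v x := by
  rw [LinearIsometryEquiv.inner_map_map, Submodule.inner_orthogonalProjectionOnto_eq_of_mem_left]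

theorem stmt11 {q : ℕ} (w : ℝ → EuclideanSpace ℝ (Fin q))
    (hmeas : Measurable w) (hloc : LocallyIntegrable w volume)
    (hbdd : ∃ M : ℝ, ∀ t : ℝ, 0 ≤ t → ‖w t‖ ≤ M)
    (S : Submodule ℝ (EuclideanSpace ℝ (Fin q)))
    (hS : (S : Set (EuclideanSpace ℝ (Fin q))) = nonPESet w)
    (W0 : Submodule ℝ (EuclideanSpace ℝ (Fin q)))
    (hprop : ∀ V0 : Submodule ℝ (EuclideanSpace ℝ (Fin q)),
      W0 ⊓ V0 = ⊥ → W0 ⊔ V0 = ⊤ →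
      ∀ (U1 : EuclideanSpace ℝ (Fin (Module.finrank ℝ W0)) →ₗ[ℝ]
              EuclideanSpace ℝ (Fin q))
        (D1 : EuclideanSpace ℝ (Fin q) →ₗ[ℝ]
              EuclideanSpace ℝ (Fin (Module.finrank ℝ W0)))
        (U2 : EuclideanSpace ℝ (Fin (q - Module.finrank ℝ W0)) →ₗ[ℝ]
              EuclideanSpace ℝ (Fin q))
        (D2 : EuclideanSpace ℝ (Fin q) →ₗ[ℝ]
              EuclideanSpace ℝ (Fin (q - Module.finrank ℝ W0))),
        Function.Injective U1 → LinearMap.range U1 = W0 →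
        LinearMap.ker D1 = V0 → D1 ∘ₗ U1 = LinearMap.id →
        Function.Injective U2 → LinearMap.range U2 = V0 →
        LinearMap.ker D2 = W0 → D2 ∘ₗ U2 = LinearMap.id →
        RegressorPE (fun t => D1 (w t)) ∧ NonPE (fun t => D2 (w t))) :
    W0 = Sᗮ := by
  have hq : Module.finrank ℝ (EuclideanSpace ℝ (Fin q)) = q := finrank_euclideanSpace_fin
  have hsum : Module.finrank ℝ W0 + Module.finrank ℝ ↥W0ᗮ
      = Module.finrank ℝ (EuclideanSpace ℝ (Fin q)) :=
    Submodule.finrank_add_finrank_orthogonal W0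
  rw [hq] at hsum
  have hdim : Module.finrank ℝ ↥W0ᗮ = q - Module.finrank ℝ W0 := by omega
  set b1 : OrthonormalBasis (Fin (Module.finrank ℝ W0)) ℝ W0 := stdOrthonormalBasis ℝ W0
    with hb1
  set b2 : OrthonormalBasis (Fin (q - Module.finrank ℝ W0)) ℝ ↥W0ᗮ :=
    (stdOrthonormalBasis ℝ ↥W0ᗮ).reindex (finCongr hdim) with hb2
  set U1 : EuclideanSpace ℝ (Fin (Module.finrank ℝ W0)) →ₗ[ℝ] EuclideanSpace ℝ (Fin q) :=
    W0.subtype ∘ₗ b1.repr.symm.toLinearEquiv.toLinearMap with hU1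
  set D1 : EuclideanSpace ℝ (Fin q) →ₗ[ℝ] EuclideanSpace ℝ (Fin (Module.finrank ℝ W0)) :=
    b1.repr.toLinearEquiv.toLinearMap ∘ₗ (Submodule.orthogonalProjectionOnto W0).toLinearMap with hD1
  set U2 : EuclideanSpace ℝ (Fin (q - Module.finrank ℝ W0)) →ₗ[ℝ] EuclideanSpace ℝ (Fin q) :=
    W0ᗮ.subtype ∘ₗ b2.repr.symm.toLinearEquiv.toLinearMap with hU2
  set D2 : EuclideanSpace ℝ (Fin q) →ₗ[ℝ] EuclideanSpace ℝ (Fin (q - Module.finrank ℝ W0)) :=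
    b2.repr.toLinearEquiv.toLinearMap ∘ₗ (Submodule.orthogonalProjectionOnto W0ᗮ).toLinearMap with hD2
  have hU1inj : Function.Injective U1 := by
    simpa [hU1] using W0.injective_subtype.comp b1.repr.symm.injective
  have hU1r : LinearMap.range U1 = W0 := by
    rw [hU1, LinearMap.range_comp, b1.repr.symm.toLinearEquiv.range,
      Submodule.map_top, Submodule.range_subtype]
  have hD1k : LinearMap.ker D1 = W0ᗮ := by
    rw [hD1, LinearMap.ker_comp, LinearMap.ker_eq_bot.mpr b1.repr.injective,
      Submodule.comap_bot]
    exact Submodule.ker_orthogonalProjectionOnto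
  have hD1U1 : D1 ∘ₗ U1 = LinearMap.id := by
    ext x
    simp [hD1, hU1, Submodule.orthogonalProjectionOnto_mem_subspace_eq_self]
  have hU2inj : Function.Injective U2 := by
    simpa [hU2] using W0ᗮ.injective_subtype.comp b2.repr.symm.injective
  have hU2r : LinearMap.range U2 = W0ᗮ := by
    rw [hU2, LinearMap.range_comp, b2.repr.symm.toLinearEquiv.range,
      Submodule.map_top, Submodule.range_subtype]
  have hD2k : LinearMap.ker D2 = W0 := by
    rw [hD2, LinearMap.ker_comp, LinearMap.ker_eq_bot.mpr b2.repr.injective,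
      Submodule.comap_bot]
    have h : LinearMap.ker (Submodule.orthogonalProjectionOnto W0ᗮ).toLinearMap = W0ᗮᗮ :=
      Submodule.ker_orthogonalProjectionOnto (K := W0ᗮ)
    rw [Submodule.orthogonal_orthogonal] at h
    exact h
  have hD2U2 : D2 ∘ₗ U2 = LinearMap.id := by
    ext x
    simp [hD2, hU2, Submodule.orthogonalProjectionOnto_mem_subspace_eq_self]
  obtain ⟨hPE, hNPE⟩ := hprop W0ᗮ (Submodule.orthogonal_disjoint W0).eq_bot
    Submodule.sup_orthogonal_of_hasOrthogonalProjection U1 D1 U2 D2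
    hU1inj hU1r hD1k hD1U1 hU2inj hU2r hD2k hD2U2
  -- Step 1: W0ᗮ ≤ S
  have hsub : W0ᗮ ≤ S := by
    intro v hv
    have h := hNPE (b2.repr ⟨v, hv⟩)
    have hfun : (fun t => (inner ℝ (b2.repr ⟨v, hv⟩) (D2 (w t)) : ℝ))
        = fun t => (inner ℝ v (w t) : ℝ) := by
      funext t
      rw [hD2]
      exact stmt11_aux_inner b2 hv (w t)
    rw [hfun] at h
    have : v ∈ nonPESet w := h
    rw [← hS] at this
    exact this
  -- Step 2: W0 ∩ S = ⊥
  have hdisj : ∀ v ∈ W0, v ∈ S → v = 0 := by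
    intro v hv hvS
    by_contra hne
    obtain ⟨β, T, hβ, hT, hineq⟩ := hPE
    have hvpos : (0:ℝ) < ‖v‖ := norm_pos_iff.mpr hne
    have hSpe : ScalarPE (fun t => (inner ℝ v (w t) : ℝ)) := by
      refine ⟨β * ‖v‖ ^ 2, T, by positivity, hT, fun t ht => ?_⟩
      have := hineq t ht (b1.repr ⟨v, hv⟩)
      have hnorm : ‖b1.repr ⟨v, hv⟩‖ = ‖v‖ := by
        rw [b1.repr.norm_map]
        rfl
      have hfun : (fun τ => (inner ℝ (b1.repr ⟨v, hv⟩) (D1 (w τ)) : ℝ) ^ 2)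
          = fun τ => (inner ℝ v (w τ) : ℝ) ^ 2 := by
        funext τ
        rw [hD1]
        rw [show ((b1.repr.toLinearEquiv.toLinearMap ∘ₗ
            (Submodule.orthogonalProjectionOnto W0).toLinearMap) (w τ))
            = b1.repr (Submodule.orthogonalProjectionOnto W0 (w τ)) from rfl,
          stmt11_aux_inner b1 hv (w τ)]
      rw [hnorm] at this
      calc β * ‖v‖ ^ 2 ≤ (1 / T) * ∫ τ in t..(t + T),
            (inner ℝ (b1.repr ⟨v, hv⟩) (D1 (w τ)) : ℝ) ^ 2 := this
        _ = (1 / T) * ∫ τ in t..(t + T), (inner ℝ v (w τ) : ℝ) ^ 2 := by rw [hfun]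
    have hvn : v ∈ nonPESet w := by rw [← hS]; exact hvS
    exact hvn hSpe
  -- Step 3: dimension count
  have hOO : Sᗮ ≤ W0 := by
    have := Submodule.orthogonal_le hsub
    rwa [Submodule.orthogonal_orthogonal] at this
  have hinf : W0 ⊓ S = ⊥ := by
    rw [Submodule.eq_bot_iff]
    intro x hx
    exact hdisj x hx.1 hx.2
  have hsumS : Module.finrank ℝ S + Module.finrank ℝ ↥Sᗮ = q := by
    rw [Submodule.finrank_add_finrank_orthogonal, hq]
  have hfr : Module.finrank ℝ W0 + Module.finrank ℝ S ≤ q := by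
    have h1 := Submodule.finrank_sup_add_finrank_inf_eq W0 S
    rw [hinf] at h1
    have h2 : Module.finrank ℝ ↥(W0 ⊔ S) ≤ q := by simpa [hq] using Submodule.finrank_le (W0 ⊔ S)
    simp [finrank_bot] at h1
    omega
  have hfin : Module.finrank ℝ W0 ≤ Module.finrank ℝ ↥Sᗮ := by omega
  exact (Submodule.eq_of_le_of_finrank_le hOO hfin).symm
end
end

section
/- Let w : ℝ → ℝ^q be a bounded regressor with the property that for every α ∈ ℝ^q, if the scalar signal t ↦ ⟨α, w(t)⟩ is not persistently exciting then ⟨α, w(t)⟩ → 0 as t → ∞. Then w is a regular regressor; that is, its non-PE set 𝒲* is a linear subspace of ℝ^q. -/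
open MeasureTheory Filter
open scoped Classical

noncomputable section

lemma not_PE_of_tendsto (u : ℝ → ℝ) (h : Tendsto u atTop (nhds 0)) :
    ¬ ScalarPE u := by
  rintro ⟨β, T, hβ, hT, hPE⟩
  have h2 : Tendsto (fun t => u t ^ 2) atTop (nhds 0) := by
    have := h.pow 2
    simpa using this
  have hev : ∀ᶠ t in atTop, u t ^ 2 ≤ β / 2 :=
    h2.eventually (ge_mem_nhds (by linarith))
  obtain ⟨t₀, ht₀⟩ := eventually_atTop.mp hev
  set t₁ := max t₀ 0 with ht₁def
  have ht₁0 : (0 : ℝ) ≤ t₁ := le_max_right _ _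
  have key := hPE t₁ ht₁0
  have hbound : (∫ τ in t₁..(t₁ + T), u τ ^ 2) ≤ β / 2 * T := by
    by_cases hint : IntervalIntegrable (fun τ => u τ ^ 2) volume t₁ (t₁ + T)
    · have hmono : (∫ τ in t₁..(t₁ + T), u τ ^ 2) ≤ ∫ _ in t₁..(t₁ + T), β / 2 := by
        apply intervalIntegral.integral_mono_on (by linarith) hint
          intervalIntegrable_const
        intro x hx
        exact ht₀ x (le_trans (le_max_left _ _) hx.1)
      have hc : (∫ _ in t₁..(t₁ + T), β / 2) = β / 2 * T := by
        simp [intervalIntegral.integral_const]; ring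
      linarith
    · rw [intervalIntegral.integral_undef hint]
      positivity
  have h1T : 0 < 1 / T := by positivity
  have : (1 / T) * ∫ τ in t₁..(t₁ + T), u τ ^ 2 ≤ (1 / T) * (β / 2 * T) :=
    mul_le_mul_of_nonneg_left hbound (le_of_lt h1T)
  have heq : (1 / T) * (β / 2 * T) = β / 2 := by field_simp
  linarith

theorem stmt13 {q : ℕ} (w : ℝ → EuclideanSpace ℝ (Fin q))
    (hmeas : Measurable w) (hloc : LocallyIntegrable w volume)
    (hbdd : ∃ M : ℝ, ∀ t : ℝ, 0 ≤ t → ‖w t‖ ≤ M)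
    (hvan : ∀ α : EuclideanSpace ℝ (Fin q),
      ¬ ScalarPE (fun t => (inner ℝ α (w t) : ℝ)) →
      Tendsto (fun t => (inner ℝ α (w t) : ℝ)) atTop (nhds 0)) :
    RegularRegressor w ∧
    ∃ S : Submodule ℝ (EuclideanSpace ℝ (Fin q)),
      (S : Set (EuclideanSpace ℝ (Fin q))) = nonPESet w := by
  have hS : ∃ S : Submodule ℝ (EuclideanSpace ℝ (Fin q)),
      (S : Set (EuclideanSpace ℝ (Fin q))) = nonPESet w := by
    refine ⟨{
      carrier := {α | Tendsto (fun t => (inner ℝ α (w t) : ℝ)) atTop (nhds 0)}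
      add_mem' := ?_
      zero_mem' := ?_
      smul_mem' := ?_ }, ?_⟩
    · intro a b ha hb
      have h0 := ha.add hb
      rw [add_zero] at h0
      simp only [Set.mem_setOf_eq, inner_add_left]
      exact h0
    · simp only [Set.mem_setOf_eq, inner_zero_left]
      exact tendsto_const_nhds
    · intro c a ha
      have h0 := ha.const_mul c
      rw [mul_zero] at h0
      simp only [Set.mem_setOf_eq, real_inner_smul_left]
      exact h0
    · ext α
      constructor
      · intro hα
        exact not_PE_of_tendsto _ hα
      · intro hα
        exact hvan α hα
  exact ⟨⟨hbdd, hS⟩, hS⟩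
end
end

section
/- Let w : ℝ → ℝ^q be a uniformly piecewise continuous regressor. Then the following are equivalent: (a) w satisfies condition (R), i.e., for each α ∈ ℝ^q, either there exist β, T > 0 such that 𝒯^w(α, β, T) is relatively dense, or for all β, T > 0 the set 𝒯^w(α, β, T) is bounded above; (b) for every α ∈ ℝ^q, if the scalar signal t ↦ ⟨α, w(t)⟩ is not persistently exciting then ⟨α, w(t)⟩ → 0 as t → ∞. -/
open MeasureTheory Filter
open scoped Classical

noncomputable section

/-- The excitation-time set `𝒯^w(α, β, T)`. -/
def ExcitationSet {E : Type*} [NormedAddCommGroup E] [InnerProductSpace ℝ E]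
    (w : ℝ → E) (α : E) (β T : ℝ) : Set ℝ :=
  {t : ℝ | 0 ≤ t ∧
    β * ‖α‖ ^ 2 ≤ (1 / T) * ∫ τ in t..(t + T), (inner ℝ α (w τ) : ℝ) ^ 2}

/-- A set `𝒯 ⊆ [0, ∞)` is relatively dense. -/
def RelativelyDense (𝒯 : Set ℝ) : Prop :=
  ∃ Td : ℝ, 0 < Td ∧ ∀ t : ℝ, 0 ≤ t → (𝒯 ∩ Set.Icc t (t + Td)).Nonempty

/-- Condition (R): for each direction `α`, either some excitation level reoccurs at a
finite interval (relative density), or all encountered excitation eventually stops. -/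
def ConditionR {E : Type*} [NormedAddCommGroup E] [InnerProductSpace ℝ E]
    (w : ℝ → E) : Prop :=
  ∀ α : E,
    (∃ β T : ℝ, 0 < β ∧ 0 < T ∧ RelativelyDense (ExcitationSet w α β T)) ∨
    (∀ β T : ℝ, 0 < β → 0 < T → BddAbove (ExcitationSet w α β T))

/-- A uniformly piecewise constant function: right continuous, constant on every connected
subset of `[0, ∞) \ 𝒥`, with a uniform minimum gap between points of discontinuity `𝒥`. -/
def UniformlyPiecewiseConstant {E : Type*} [NormedAddCommGroup E]
    (ρ : ℝ → E) : Prop :=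
  ∃ J : Set ℝ, J ⊆ Set.Ici 0 ∧
    (∀ t : ℝ, 0 ≤ t → ContinuousWithinAt ρ (Set.Ici t) t) ∧
    (∀ I : Set ℝ, I ⊆ Set.Ici (0 : ℝ) \ J → IsPreconnected I →
      ∀ t1 ∈ I, ∀ t2 ∈ I, ρ t1 = ρ t2) ∧
    (∃ δ : ℝ, 0 < δ ∧ ∀ t1 ∈ J, ∀ t2 ∈ J, t1 ≠ t2 → δ ≤ |t1 - t2|)

/-- A uniformly piecewise continuous function: differs from some uniformly piecewise
constant function by a uniformly continuous function on `[0, ∞)`. -/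
def UniformlyPiecewiseContinuous {E : Type*} [NormedAddCommGroup E]
    (w : ℝ → E) : Prop :=
  ∃ ρ : ℝ → E, UniformlyPiecewiseConstant ρ ∧
    UniformContinuousOn (fun t => w t - ρ t) (Set.Ici 0)


lemma sep_finite {J : Set ℝ} {δ : ℝ} (hδ : 0 < δ)
    (hsep : ∀ t1 ∈ J, ∀ t2 ∈ J, t1 ≠ t2 → δ ≤ |t1 - t2|) (c d : ℝ) :
    (J ∩ Set.Icc c d).Finite := by
  have hinj : Set.InjOn (fun t : ℝ => ⌊t / δ⌋) (J ∩ Set.Icc c d) := by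
    intro x hx y hy hxy
    by_contra hne
    have h1 := hsep x hx.1 y hy.1 hne
    have hfl : ⌊x / δ⌋ = ⌊y / δ⌋ := hxy
    have h2 : |x / δ - y / δ| < 1 := by
      rw [abs_sub_lt_iff]
      constructor
      · calc x / δ - y / δ < (⌊x / δ⌋ + 1) - ⌊y / δ⌋ := by
              have := Int.lt_floor_add_one (x / δ)
              have := Int.floor_le (y / δ)
              linarith
          _ = 1 := by rw [hfl]; ring
      · calc y / δ - x / δ < (⌊y / δ⌋ + 1) - ⌊x / δ⌋ := by
              have := Int.lt_floor_add_one (y / δ)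
              have := Int.floor_le (x / δ)
              linarith
          _ = 1 := by rw [hfl]; ring
    have h3 : |x - y| < δ := by
      have : x / δ - y / δ = (x - y) / δ := by ring
      rw [this, abs_div, abs_of_pos hδ, div_lt_one hδ] at h2
      exact h2
    linarith
  have himg : (fun t : ℝ => ⌊t / δ⌋) '' (J ∩ Set.Icc c d) ⊆
      Set.Icc ⌊c / δ⌋ ⌊d / δ⌋ := by
    rintro _ ⟨t, ⟨_, ht⟩, rfl⟩
    exact ⟨Int.floor_le_floor ((div_le_div_iff_of_pos_right hδ).mpr ht.1),
      Int.floor_le_floor ((div_le_div_iff_of_pos_right hδ).mpr ht.2)⟩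
  exact Set.Finite.of_finite_image ((Set.finite_Icc _ _).subset himg) hinj

variable {E : Type*} [NormedAddCommGroup E]

lemma const_from_right {ρ : ℝ → E} {J : Set ℝ} {a : ℝ}
    (hrc : ∀ t : ℝ, 0 ≤ t → ContinuousWithinAt ρ (Set.Ici t) t)
    (hconst : ∀ I : Set ℝ, I ⊆ Set.Ici (0 : ℝ) \ J → IsPreconnected I →
      ∀ t1 ∈ I, ∀ t2 ∈ I, ρ t1 = ρ t2)
    (s : Set ℝ) (hs : s ⊆ Set.Ici (0 : ℝ) \ J) (hpre : IsPreconnected s)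
    (hsub : s ⊆ Set.Ici a) (ha : 0 ≤ a) (hne : (nhdsWithin a s).NeBot) :
    ∀ τ ∈ s, ρ τ = ρ a := by
  intro τ hτ
  have hcw : ContinuousWithinAt ρ s a := (hrc a ha).mono hsub
  have h1 : Tendsto ρ (nhdsWithin a s) (nhds (ρ a)) := hcw
  have h2 : Tendsto ρ (nhdsWithin a s) (nhds (ρ τ)) := by
    apply Tendsto.congr' _ (tendsto_const_nhds : Tendsto (fun _ => ρ τ) _ _)
    filter_upwards [self_mem_nhdsWithin] with x hx
    exact (hconst s hs hpre τ hτ x hx)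
  exact tendsto_nhds_unique h2 h1

section PW
variable {ρ : ℝ → E} {J : Set ℝ} {δ : ℝ}
variable (hJ0 : J ⊆ Set.Ici (0:ℝ))
variable (hrc : ∀ t : ℝ, 0 ≤ t → ContinuousWithinAt ρ (Set.Ici t) t)
variable (hconst : ∀ I : Set ℝ, I ⊆ Set.Ici (0 : ℝ) \ J → IsPreconnected I →
      ∀ t1 ∈ I, ∀ t2 ∈ I, ρ t1 = ρ t2)
variable (hδ : 0 < δ)
variable (hsep : ∀ t1 ∈ J, ∀ t2 ∈ J, t1 ≠ t2 → δ ≤ |t1 - t2|)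

include hJ0 hrc hconst hδ hsep in
/-- every value of ρ on [0,∞) is attained at a jump point or at 0, in a maximal way -/
lemma repr_exists (t : ℝ) (ht : 0 ≤ t) :
    ∃ a, a ∈ (J ∩ Set.Icc 0 t) ∪ {0} ∧ a ≤ t ∧ (∀ x ∈ (J ∩ Set.Icc 0 t) ∪ {0}, x ≤ a)
      ∧ ρ t = ρ a := by
  classical
  set S : Set ℝ := (J ∩ Set.Icc 0 t) ∪ {0} with hS
  have hfin : S.Finite := (sep_finite hδ hsep 0 t).union (Set.finite_singleton 0)
  have hne : S.Nonempty := ⟨0, Or.inr rfl⟩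
  obtain ⟨a, haS, hmax⟩ : ∃ a ∈ S, ∀ a' ∈ S, id a ≤ id a' → id a = id a' := by
    obtain ⟨a, haS, hmax⟩ := Set.Finite.exists_maximalFor id S hfin hne
    exact ⟨a, haS, fun a' ha' h => le_antisymm h (hmax ha' h)⟩
  have hmax' : ∀ x ∈ S, x ≤ a := by
    intro x hx
    by_contra hlt
    push_neg at hlt
    exact absurd (hmax x hx hlt.le) (by simpa using hlt.ne)
  have ha0 : 0 ≤ a := by
    rcases haS with h | h
    · exact h.2.1
    · simp at h; simp [h]
  have hat : a ≤ t := by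
    rcases haS with h | h
    · exact h.2.2
    · simp at h; simp [h, ht]
  rcases eq_or_lt_of_le hat with rfl | halt
  · exact ⟨a, haS, le_rfl, hmax', rfl⟩
  refine ⟨a, haS, hat, hmax', ?_⟩
  have hIoc : Set.Ioc a t ⊆ Set.Ici (0:ℝ) \ J := by
    intro x hx
    refine ⟨le_trans ha0 hx.1.le, fun hxJ => ?_⟩
    have : x ∈ S := Or.inl ⟨hxJ, le_trans ha0 hx.1.le, hx.2⟩
    exact absurd (hmax' x this) (not_le.mpr hx.1)
  have hnb : (nhdsWithin a (Set.Ioc a t)).NeBot := by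
    rw [← mem_closure_iff_nhdsWithin_neBot, closure_Ioc halt.ne]
    exact ⟨le_rfl, hat⟩
  exact const_from_right hrc hconst _ hIoc isPreconnected_Ioc
    (Set.Ioc_subset_Icc_self.trans (Set.Icc_subset_Ici_self)) ha0 hnb t ⟨halt, le_rfl⟩

include hJ0 hrc hconst hδ hsep in
lemma interval_exists (t : ℝ) (ht : δ ≤ t) :
    ∃ a b', 0 ≤ a ∧ a ≤ t ∧ t < b' ∧ a + δ ≤ b' ∧
      ∀ τ ∈ Set.Ico a b', ρ τ = ρ a := by
  classical
  have ht0 : (0:ℝ) ≤ t := le_trans hδ.le ht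
  obtain ⟨a, haS, hat, hmax, -⟩ := repr_exists hJ0 hrc hconst hδ hsep t ht0
  have ha0 : 0 ≤ a := by
    rcases haS with h | h
    · exact h.2.1
    · simp at h; simp [h]
  -- find b'
  have key : ∃ b', t < b' ∧ a + δ ≤ b' ∧ J ∩ Set.Ioo a b' = ∅ := by
    by_cases hJt : (J ∩ Set.Ioi t).Nonempty
    · obtain ⟨j0, hj0J, hj0t⟩ := hJt
      set F : Set ℝ := J ∩ Set.Ioc t j0 with hF
      have hFfin : F.Finite := (sep_finite hδ hsep t j0).subset
        (fun x hx => ⟨hx.1, hx.2.1.le, hx.2.2⟩)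
      have hFne : F.Nonempty := ⟨j0, hj0J, hj0t, le_rfl⟩
      obtain ⟨b', hbF, hbmin⟩ : ∃ b' ∈ F, ∀ a' ∈ F, id a' ≤ id b' → id b' = id a' := by
        obtain ⟨b', hbF, hbmin⟩ := Set.Finite.exists_minimalFor id F hFfin hFne
        exact ⟨b', hbF, fun a' ha' h => le_antisymm (hbmin ha' h) h⟩
      have hbmin' : ∀ x ∈ F, b' ≤ x := by
        intro x hx
        by_contra hlt
        push_neg at hlt
        exact absurd (hbmin x hx hlt.le) (by simpa using hlt.ne')
      have hbJ : b' ∈ J := hbF.1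
      have htb : t < b' := hbF.2.1
      refine ⟨b', htb, ?_, ?_⟩
      · rcases haS with h | h
        · have : a ≠ b' := fun he => absurd (he ▸ htb) (not_lt.mpr hat)
          have := hsep a h.1 b' hbJ this
          rcases abs_cases (a - b') with ⟨h1, _⟩ | ⟨h1, _⟩ <;> linarith
        · simp at h; subst h; linarith
      · ext x
        simp only [Set.mem_inter_iff, Set.mem_Ioo, Set.mem_empty_iff_false, iff_false]
        rintro ⟨hxJ, hxa, hxb⟩
        by_cases hxt : x ≤ t
        · have : x ∈ (J ∩ Set.Icc 0 t) ∪ {0} := Or.inl ⟨hxJ, le_trans ha0 hxa.le, hxt⟩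
          exact absurd (hmax x this) (not_le.mpr hxa)
        · push_neg at hxt
          have hxj0 : x ≤ j0 := le_trans hxb.le hbF.2.2
          exact absurd (hbmin' x ⟨hxJ, hxt, hxj0⟩) (not_le.mpr hxb)
    · refine ⟨t + δ + 1, by linarith, by linarith, ?_⟩
      ext x
      simp only [Set.mem_inter_iff, Set.mem_Ioo, Set.mem_empty_iff_false, iff_false]
      rintro ⟨hxJ, hxa, hxb⟩
      by_cases hxt : x ≤ t
      · have : x ∈ (J ∩ Set.Icc 0 t) ∪ {0} := Or.inl ⟨hxJ, le_trans ha0 hxa.le, hxt⟩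
        exact absurd (hmax x this) (not_le.mpr hxa)
      · push_neg at hxt
        exact hJt ⟨x, hxJ, hxt⟩
  obtain ⟨b', htb, hab, hJoo⟩ := key
  refine ⟨a, b', ha0, hat, htb, hab, ?_⟩
  have hsub : Set.Ioo a b' ⊆ Set.Ici (0:ℝ) \ J := by
    intro x hx
    refine ⟨le_trans ha0 hx.1.le, fun hxJ => ?_⟩
    have : x ∈ J ∩ Set.Ioo a b' := ⟨hxJ, hx⟩
    simp [hJoo] at this
  have halt : a < b' := lt_of_le_of_lt hat htb
  have hnb : (nhdsWithin a (Set.Ioo a b')).NeBot := by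
    rw [← mem_closure_iff_nhdsWithin_neBot, closure_Ioo halt.ne]
    exact ⟨le_rfl, halt.le⟩
  have hco := const_from_right hrc hconst _ hsub isPreconnected_Ioo
    (Set.Ioo_subset_Icc_self.trans Set.Icc_subset_Ici_self) ha0 hnb
  intro τ hτ
  rcases eq_or_lt_of_le hτ.1 with rfl | h
  · rfl
  · exact hco τ ⟨h, hτ.2⟩

include hJ0 hrc hconst hδ hsep in
lemma rho_bounded (b : ℝ) : ∃ M : ℝ, ∀ τ ∈ Set.Icc (0:ℝ) b, ‖ρ τ‖ ≤ M := by
  classical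
  set S : Set ℝ := (J ∩ Set.Icc 0 b) ∪ {0} with hS
  have hfin : S.Finite := (sep_finite hδ hsep 0 b).union (Set.finite_singleton 0)
  have hfin2 : ((fun x => ‖ρ x‖) '' S).Finite := hfin.image _
  have hne : ((fun x => ‖ρ x‖) '' S).Nonempty := ⟨‖ρ 0‖, 0, Or.inr rfl, rfl⟩
  obtain ⟨M, hM⟩ := hfin2.bddAbove
  refine ⟨M, fun τ hτ => ?_⟩
  obtain ⟨a, haS, hat, -, heq⟩ := repr_exists hJ0 hrc hconst hδ hsep τ hτ.1
  have haS' : a ∈ S := by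
    rcases haS with h | h
    · exact Or.inl ⟨h.1, h.2.1, le_trans h.2.2 hτ.2⟩
    · exact Or.inr h
  rw [heq]
  exact hM ⟨a, haS', rfl⟩
end PW

lemma w_bounded {w : ℝ → E} (hupc : ∃ ρ : ℝ → E,
    (∃ J : Set ℝ, J ⊆ Set.Ici 0 ∧
      (∀ t : ℝ, 0 ≤ t → ContinuousWithinAt ρ (Set.Ici t) t) ∧
      (∀ I : Set ℝ, I ⊆ Set.Ici (0 : ℝ) \ J → IsPreconnected I →
        ∀ t1 ∈ I, ∀ t2 ∈ I, ρ t1 = ρ t2) ∧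
      (∃ δ : ℝ, 0 < δ ∧ ∀ t1 ∈ J, ∀ t2 ∈ J, t1 ≠ t2 → δ ≤ |t1 - t2|)) ∧
    UniformContinuousOn (fun t => w t - ρ t) (Set.Ici 0)) (b : ℝ) :
    ∃ M : ℝ, ∀ τ ∈ Set.Icc (0:ℝ) b, ‖w τ‖ ≤ M := by
  obtain ⟨ρ, ⟨J, hJ0, hrc, hconst, δ, hδ, hsep⟩, hucv⟩ := hupc
  obtain ⟨M1, hM1⟩ := rho_bounded hJ0 hrc hconst hδ hsep b
  have hcont : ContinuousOn (fun t => w t - ρ t) (Set.Icc (0:ℝ) b) :=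
    (hucv.continuousOn).mono Set.Icc_subset_Ici_self
  obtain ⟨M2, hM2⟩ := (isCompact_Icc).exists_bound_of_continuousOn hcont
  refine ⟨M1 + M2, fun τ hτ => ?_⟩
  have : w τ = ρ τ + (w τ - ρ τ) := by abel
  rw [this]
  exact le_trans (norm_add_le _ _) (add_le_add (hM1 τ hτ) (hM2 τ hτ))

section AuxMain
variable {q : ℕ} (w : ℝ → EuclideanSpace ℝ (Fin q)) (hmeas : Measurable w)
  (hupc : UniformlyPiecewiseContinuous w)

include hmeas hupc in
lemma sq_intInt_s15 (α : EuclideanSpace ℝ (Fin q)) {a b : ℝ} (ha : 0 ≤ a) (hab : a ≤ b) :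
    IntervalIntegrable (fun τ => (inner ℝ α (w τ) : ℝ) ^ 2) volume a b := by
  rw [intervalIntegrable_iff_integrableOn_Ioc_of_le hab]
  obtain ⟨M, hM⟩ := w_bounded hupc b
  have hum : Measurable fun τ => (inner ℝ α (w τ) : ℝ) :=
    Measurable.inner measurable_const hmeas
  have hmsq : Measurable fun τ => (inner ℝ α (w τ) : ℝ) ^ 2 := hum.pow_const 2
  refine Integrable.mono' (g := fun _ => (‖α‖ * M) ^ 2)
    (integrableOn_const measure_Ioc_lt_top.ne) hmsq.aestronglyMeasurable ?_
  filter_upwards [ae_restrict_mem measurableSet_Ioc] with τ hτ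
  have hτ' : τ ∈ Set.Icc (0:ℝ) b := ⟨le_trans ha hτ.1.le, hτ.2⟩
  have h1 : |(inner ℝ α (w τ) : ℝ)| ≤ ‖α‖ * M := by
    calc |(inner ℝ α (w τ) : ℝ)| ≤ ‖α‖ * ‖w τ‖ := abs_real_inner_le_norm _ _
      _ ≤ ‖α‖ * M := by
          have := hM τ hτ'
          exact mul_le_mul_of_nonneg_left this (norm_nonneg _)
  have : ‖(inner ℝ α (w τ) : ℝ) ^ 2‖ = |(inner ℝ α (w τ) : ℝ)| ^ 2 := by
    rw [Real.norm_eq_abs, abs_of_nonneg (sq_nonneg _), sq_abs]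
  rw [this]
  exact pow_le_pow_left₀ (abs_nonneg _) h1 2

end AuxMain

theorem stmt15 {q : ℕ} (w : ℝ → EuclideanSpace ℝ (Fin q))
    (hmeas : Measurable w) (hloc : LocallyIntegrable w volume)
    (hupc : UniformlyPiecewiseContinuous w) :
    ConditionR w ↔
      ∀ α : EuclideanSpace ℝ (Fin q),
        ¬ ScalarPE (fun t => (inner ℝ α (w t) : ℝ)) →
        Tendsto (fun t => (inner ℝ α (w t) : ℝ)) atTop (nhds 0) := by
  constructor
  · -- ConditionR → convergence
    intro hR α hnpe
    by_cases hα : α = 0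
    · subst hα
      simp only [inner_zero_left]
      exact tendsto_const_nhds
    have hα2 : (0:ℝ) < ‖α‖^2 := pow_pos (norm_pos_iff.mpr hα) 2
    rcases hR α with ⟨β, T, hβ, hT, Td, hTd, hdense⟩ | hbdd
    · exfalso
      apply hnpe
      refine ⟨β * ‖α‖^2 * T / (T + Td), T + Td, by positivity, by positivity, ?_⟩
      intro t ht
      obtain ⟨s, hsE, hsI⟩ := hdense t ht
      obtain ⟨hs0, hsint⟩ := hsE
      have hsT : s + T ≤ t + (T + Td) := by
        have := hsI.2
        linarith
      have h1 := sq_intInt_s15 w hmeas hupc α ht hsI.1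
      have h2 := sq_intInt_s15 w hmeas hupc α hs0 (by linarith : s ≤ s + T)
      have h3 := sq_intInt_s15 w hmeas hupc α (by linarith : (0:ℝ) ≤ s + T) hsT
      have e1 := intervalIntegral.integral_add_adjacent_intervals h1 (h2.trans h3)
      have e2 := intervalIntegral.integral_add_adjacent_intervals h2 h3
      have n1 : (0:ℝ) ≤ ∫ τ in t..s, (inner ℝ α (w τ) : ℝ)^2 :=
        intervalIntegral.integral_nonneg hsI.1 (fun x _ => sq_nonneg _)
      have n3 : (0:ℝ) ≤ ∫ τ in (s+T)..(t+(T+Td)), (inner ℝ α (w τ) : ℝ)^2 :=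
        intervalIntegral.integral_nonneg hsT (fun x _ => sq_nonneg _)
      have core : β * ‖α‖^2 * T ≤ ∫ τ in s..(s+T), (inner ℝ α (w τ) : ℝ)^2 := by
        rw [one_div, inv_mul_eq_div, le_div_iff₀ hT] at hsint
        exact hsint
      have hI' : β * ‖α‖^2 * T ≤ ∫ τ in t..(t+(T+Td)), (inner ℝ α (w τ) : ℝ)^2 := by
        rw [← e1, ← e2]
        linarith
      rw [one_div_mul_eq_div]
      exact div_le_div_of_nonneg_right hI' (by linarith)
    · by_contra hcon
      rw [Metric.tendsto_atTop] at hcon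
      push_neg at hcon
      obtain ⟨ε, hε, hfreq⟩ := hcon
      obtain ⟨ρ, ⟨J, hJ0, hrc, hconst, δ, hδ, hsep⟩, hucv⟩ := id hupc
      set g := fun τ => (inner ℝ α (w τ - ρ τ) : ℝ) with hgdef
      have hg : UniformContinuousOn g (Set.Ici 0) := by
        rw [Metric.uniformContinuousOn_iff] at hucv ⊢
        intro ε' hε'
        obtain ⟨d, hd, hclose⟩ := hucv (ε'/(‖α‖+1)) (by positivity)
        refine ⟨d, hd, fun x hx y hy hxy => ?_⟩
        have h1 := hclose x hx y hy hxy
        rw [dist_eq_norm] at h1 ⊢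
        have h2 : g x - g y = (inner ℝ α ((w x - ρ x) - (w y - ρ y)) : ℝ) := by
          simp [hgdef, inner_sub_right]
        rw [h2]
        calc ‖(inner ℝ α ((w x - ρ x) - (w y - ρ y)) : ℝ)‖
            ≤ ‖α‖ * ‖(w x - ρ x) - (w y - ρ y)‖ := norm_inner_le_norm _ _
          _ ≤ (‖α‖+1) * ‖(w x - ρ x) - (w y - ρ y)‖ :=
              mul_le_mul_of_nonneg_right (by linarith [norm_nonneg α]) (norm_nonneg _)
          _ < (‖α‖+1) * (ε'/(‖α‖+1)) := by
              apply mul_lt_mul_of_pos_left h1 (by positivity)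
          _ = ε' := by field_simp
      rw [Metric.uniformContinuousOn_iff] at hg
      obtain ⟨η0, hη0, hgc⟩ := hg (ε/2) (by positivity)
      set η := min (η0/2) (δ/2) with hη
      have hηpos : 0 < η := lt_min (by positivity) (by positivity)
      have hηη0 : η < η0 := lt_of_le_of_lt (min_le_left _ _) (by linarith)
      have hηδ : 2*η ≤ δ := by
        have := min_le_right (η0/2) (δ/2)
        linarith
      have hβ0 : 0 < ε^2/(4*‖α‖^2) := by positivity
      obtain ⟨N0, hN0⟩ := hbdd (ε^2/(4*‖α‖^2)) η hβ0 hηpos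
      obtain ⟨t, htN, hut⟩ := hfreq (max (N0 + η + 1) δ)
      have htδ : δ ≤ t := le_trans (le_max_right _ _) htN
      have htN0 : N0 + η + 1 ≤ t := le_trans (le_max_left _ _) htN
      have ht0 : (0:ℝ) ≤ t := le_trans hδ.le htδ
      have hut' : ε ≤ |(inner ℝ α (w t) : ℝ)| := by
        rwa [Real.dist_0_eq_abs] at hut
      obtain ⟨a, b', ha0, hat, htb, hab, hcst⟩ := interval_exists hJ0 hrc hconst hδ hsep t htδ
      obtain ⟨t', ht'0, htt', hsub, htmem⟩ :
          ∃ t', 0 ≤ t' ∧ t - η ≤ t' ∧ Set.Icc t' (t'+η) ⊆ Set.Ico a b' ∧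
            t ∈ Set.Icc t' (t'+η) := by
        rcases lt_or_ge (t + η) b' with hcase | hcase
        · refine ⟨t, ht0, by linarith, ?_, ⟨le_rfl, by linarith⟩⟩
          intro τ hτ
          exact ⟨le_trans hat hτ.1, lt_of_le_of_lt hτ.2 hcase⟩
        · refine ⟨t - η, by linarith, le_rfl, ?_, ⟨by linarith, by linarith⟩⟩
          intro τ hτ
          constructor
          · have : a + 2*η ≤ b' := by linarith
            have : a ≤ t - η := by linarith
            linarith [hτ.1]
          · have : τ ≤ t := by linarith [hτ.2]
            linarith
      have hdecomp : ∀ τ ∈ Set.Ico a b',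
          (inner ℝ α (w τ) : ℝ) = (inner ℝ α (ρ a) : ℝ) + g τ := by
        intro τ hτ
        have hwτ : w τ = ρ τ + (w τ - ρ τ) := by abel
        calc (inner ℝ α (w τ) : ℝ) = inner ℝ α (ρ τ + (w τ - ρ τ)) := by rw [← hwτ]
          _ = (inner ℝ α (ρ τ) : ℝ) + g τ := inner_add_right _ _ _
          _ = (inner ℝ α (ρ a) : ℝ) + g τ := by rw [hcst τ hτ]
      have hptw : ∀ τ ∈ Set.Icc t' (t'+η), ε/2 ≤ |(inner ℝ α (w τ) : ℝ)| := by
        intro τ hτ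
        have hτab : τ ∈ Set.Ico a b' := hsub hτ
        have htab : t ∈ Set.Ico a b' := hsub htmem
        have hτ0 : (0:ℝ) ≤ τ := le_trans ht'0 hτ.1
        have hdist : dist τ t < η0 := by
          rw [Real.dist_eq]
          have h1 : |τ - t| ≤ η := by
            rw [abs_le]
            constructor <;> [linarith [hτ.1, htmem.2]; linarith [hτ.2, htmem.1]]
          linarith
        have hgg : |g τ - g t| < ε/2 := by
          have := hgc τ hτ0 t ht0 hdist
          rwa [Real.dist_eq] at this
        have hτd := hdecomp τ hτab
        have htd := hdecomp t htab
        have hdiff : (inner ℝ α (w τ) : ℝ) - (inner ℝ α (w t) : ℝ) = g τ - g t := by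
          rw [hτd, htd]; ring
        have habs : |(inner ℝ α (w t) : ℝ)| - |(inner ℝ α (w τ) : ℝ)| ≤ |g τ - g t| := by
          rw [← hdiff]
          have := abs_sub_abs_le_abs_sub (inner ℝ α (w t) : ℝ) (inner ℝ α (w τ) : ℝ)
          rw [abs_sub_comm] at this
          exact this
        linarith
      have hmem : t' ∈ ExcitationSet w α (ε^2/(4*‖α‖^2)) η := by
        refine ⟨ht'0, ?_⟩
        have heq : ε^2/(4*‖α‖^2) * ‖α‖^2 = ε^2/4 := by
          field_simp
        rw [heq]
        have hint : η * (ε/2)^2 ≤ ∫ τ in t'..(t'+η), (inner ℝ α (w τ) : ℝ)^2 := by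
          have hii := sq_intInt_s15 w hmeas hupc α ht'0 (by linarith : t' ≤ t' + η)
          have hmono := intervalIntegral.integral_mono_on (by linarith : t' ≤ t' + η)
            (intervalIntegrable_const (c := (ε/2)^2)) hii ?_
          · rw [intervalIntegral.integral_const] at hmono
            have : (t' + η - t') • (ε/2)^2 = η * (ε/2)^2 := by
              simp [smul_eq_mul]
            linarith [hmono, this ▸ hmono]
          · intro τ hτ
            have h1 := hptw τ hτ
            have : (ε/2)^2 ≤ |(inner ℝ α (w τ) : ℝ)|^2 :=
              pow_le_pow_left₀ (by positivity) h1 2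
            rwa [sq_abs] at this
        rw [one_div_mul_eq_div, le_div_iff₀ hηpos]
        calc ε^2/4 * η = η * (ε/2)^2 := by ring
          _ ≤ _ := hint
      have : t' ≤ N0 := hN0 hmem
      linarith
  · -- convergence → ConditionR
    intro h α
    by_cases hα : α = 0
    · subst hα
      refine Or.inl ⟨1, 1, one_pos, one_pos, 1, one_pos, fun t ht => ⟨t, ⟨ht, ?_⟩, le_refl t, by linarith⟩⟩
      simp [inner_zero_left]
    have hα2 : (0:ℝ) < ‖α‖^2 := pow_pos (norm_pos_iff.mpr hα) 2
    by_cases hpe : ScalarPE (fun t => (inner ℝ α (w t) : ℝ))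
    · obtain ⟨β, T, hβ, hT, hPE⟩ := hpe
      refine Or.inl ⟨β/‖α‖^2, T, by positivity, hT, 1, one_pos,
        fun t ht => ⟨t, ⟨ht, ?_⟩, le_refl t, by linarith⟩⟩
      have heq : β/‖α‖^2 * ‖α‖^2 = β := div_mul_cancel₀ _ hα2.ne'
      rw [heq]
      exact hPE t ht
    · refine Or.inr (fun β T hβ hT => ?_)
      have htd := h α hpe
      set ε := min 1 (β*‖α‖^2/2) with hεdef
      have hεpos : 0 < ε := lt_min one_pos (by positivity)
      have hεsq : ε^2 < β*‖α‖^2 := by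
        have h1 : ε ≤ 1 := min_le_left _ _
        have h2 : ε ≤ β*‖α‖^2/2 := min_le_right _ _
        nlinarith
      rw [Metric.tendsto_atTop] at htd
      obtain ⟨N, hN⟩ := htd ε hεpos
      refine ⟨max N 0, fun t htE => ?_⟩
      by_contra hgt
      push_neg at hgt
      obtain ⟨ht0, hint⟩ := htE
      have htN : N ≤ t := le_trans (le_max_left _ _) hgt.le
      have hineq : ∫ τ in t..(t+T), (inner ℝ α (w τ) : ℝ)^2 ≤ T * ε^2 := by
        have hii := sq_intInt_s15 w hmeas hupc α ht0 (by linarith : t ≤ t + T)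
        have hmono := intervalIntegral.integral_mono_on (by linarith : t ≤ t + T)
          hii (intervalIntegrable_const (c := ε^2)) ?_
        · rw [intervalIntegral.integral_const] at hmono
          have he : (t + T - t) • ε^2 = T * ε^2 := by simp [smul_eq_mul]
          linarith [he ▸ hmono]
        · intro τ hτ
          have hτN : N ≤ τ := le_trans htN hτ.1
          have := hN τ hτN
          rw [Real.dist_0_eq_abs] at this
          have h2 : |(inner ℝ α (w τ) : ℝ)|^2 ≤ ε^2 :=
            pow_le_pow_left₀ (abs_nonneg _) this.le 2
          rwa [sq_abs] at h2
      have hfin : β * ‖α‖^2 ≤ ε^2 := by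
        have h2 : (1/T) * ∫ τ in t..(t+T), (inner ℝ α (w τ) : ℝ)^2 ≤ (1/T)*(T*ε^2) :=
          mul_le_mul_of_nonneg_left hineq (by positivity)
        have h3 : (1/T)*(T*ε^2) = ε^2 := by field_simp
        linarith
      linarith
end
end

section
/- Let w : ℝ → ℝ^q be a bounded, uniformly piecewise continuous regressor. Then the following are equivalent: (a) w is a regular regressor (its non-PE set 𝒲* is a linear subspace) and w satisfies condition (R); (b) for every α ∈ ℝ^q, if the scalar signal t ↦ ⟨α, w(t)⟩ is not persistently exciting then ⟨α, w(t)⟩ → 0 as t → ∞. -/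
open MeasureTheory Filter
open scoped Classical

noncomputable section

section Helpers

variable {u : ℝ → ℝ}

lemma sqInt (hu : Measurable u) {C : ℝ} (hC : ∀ t : ℝ, 0 ≤ t → |u t| ≤ C)
    {a b : ℝ} (ha : 0 ≤ a) :
    IntegrableOn (fun τ => u τ ^ 2) (Set.Ioc a b) volume := by
  refine Integrable.mono' (g := fun _ => C ^ 2)
    ((integrableOn_const_iff (by simp)).2 (Or.inr measure_Ioc_lt_top))
    ((hu.pow_const 2).aestronglyMeasurable) ?_
  filter_upwards [ae_restrict_mem measurableSet_Ioc] with τ hτ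
  have h0 : (0:ℝ) ≤ τ := le_trans ha hτ.1.le
  have h1 : |u τ| ^ 2 ≤ C ^ 2 := pow_le_pow_left₀ (abs_nonneg _) (hC τ h0) 2
  calc ‖u τ ^ 2‖ = |u τ| ^ 2 := by rw [Real.norm_eq_abs, abs_pow]
    _ ≤ C ^ 2 := h1

/-- average upper bound -/
lemma avg_le (hu : Measurable u) {C : ℝ} (hC : ∀ t : ℝ, 0 ≤ t → |u t| ≤ C)
    {c T t : ℝ} (hT : 0 < T) (ht : 0 ≤ t) (hc : ∀ τ, t ≤ τ → u τ ^ 2 ≤ c) :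
    (1 / T) * ∫ τ in t..(t + T), u τ ^ 2 ≤ c := by
  have h1 : (∫ τ in t..(t + T), u τ ^ 2) = ∫ τ in Set.Ioc t (t + T), u τ ^ 2 :=
    intervalIntegral.integral_of_le (by linarith)
  have h2 : (∫ τ in Set.Ioc t (t + T), u τ ^ 2) ≤ ∫ τ in Set.Ioc t (t + T), (fun _ => c) τ :=
    setIntegral_mono_on (sqInt hu hC ht)
      ((integrableOn_const_iff (by simp)).2 (Or.inr measure_Ioc_lt_top))
      measurableSet_Ioc (fun x hx => hc x hx.1.le)
  have h3 : (∫ _τ in Set.Ioc t (t + T), c) = T * c := by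
    rw [setIntegral_const, measureReal_def, Real.volume_Ioc]
    rw [smul_eq_mul, ENNReal.toReal_ofReal (by linarith)]
    ring_nf
  rw [h1]
  have h4 : (∫ τ in Set.Ioc t (t + T), u τ ^ 2) ≤ T * c := by
    calc (∫ τ in Set.Ioc t (t + T), u τ ^ 2) ≤ _ := h2
      _ = T * c := h3
  rw [div_mul_eq_mul_div, one_mul, div_le_iff₀ hT]
  linarith [h4]

/-- integral monotone on subintervals -/
lemma sub_int (hu : Measurable u) {C : ℝ} (hC : ∀ t : ℝ, 0 ≤ t → |u t| ≤ C)
    {t T s T' : ℝ} (hT' : 0 ≤ T') (ht : 0 ≤ t) (hts : t ≤ s) (hsT : s + T' ≤ t + T) :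
    (∫ τ in s..(s + T'), u τ ^ 2) ≤ ∫ τ in t..(t + T), u τ ^ 2 := by
  rw [intervalIntegral.integral_of_le (by linarith), intervalIntegral.integral_of_le (by linarith)]
  refine setIntegral_mono_set (sqInt hu hC ht) ?_ ?_
  · exact ae_of_all _ fun τ => sq_nonneg _
  · exact HasSubset.Subset.eventuallyLE (Set.Ioc_subset_Ioc hts hsT)

/-- integral lower bound from pointwise bound on an open interval -/
lemma int_lb (hu : Measurable u) {C : ℝ} (hC : ∀ t : ℝ, 0 ≤ t → |u t| ≤ C)
    {a L c : ℝ} (ha : 0 ≤ a) (hL : 0 < L) (hc : 0 ≤ c)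
    (h : ∀ s ∈ Set.Ioo a (a + L), c ≤ |u s|) :
    c ^ 2 * L ≤ ∫ τ in a..(a + L), u τ ^ 2 := by
  rw [intervalIntegral.integral_of_le (by linarith)]
  have h1 : c ^ 2 * (volume (Set.Ioo a (a + L))).toReal ≤ ∫ τ in Set.Ioo a (a + L), u τ ^ 2 := by
    refine setIntegral_ge_of_const_le_real measurableSet_Ioo
      (ne_of_lt measure_Ioo_lt_top) (fun x hx => ?_)
      ((sqInt hu hC ha).mono_set Set.Ioo_subset_Ioc_self)
    have := pow_le_pow_left₀ hc (h x hx) 2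
    calc c ^ 2 ≤ |u x| ^ 2 := this
      _ = u x ^ 2 := by rw [← abs_pow, abs_of_nonneg (sq_nonneg _)]
  have h2 : (∫ τ in Set.Ioo a (a + L), u τ ^ 2) ≤ ∫ τ in Set.Ioc a (a + L), u τ ^ 2 := by
    refine setIntegral_mono_set (sqInt hu hC ha) (ae_of_all _ fun τ => sq_nonneg _)
      (HasSubset.Subset.eventuallyLE Set.Ioo_subset_Ioc_self)
  rw [Real.volume_Ioo] at h1
  rw [ENNReal.toReal_ofReal (by linarith)] at h1
  have : a + L - a = L := by ring
  rw [this] at h1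
  linarith

end Helpers

lemma key_pc {u p v : ℝ → ℝ} (hu : ∀ t, u t = p t + v t)
    {J : Set ℝ}
    (hrc : ∀ t : ℝ, 0 ≤ t → ContinuousWithinAt p (Set.Ici t) t)
    (hconst : ∀ I : Set ℝ, I ⊆ Set.Ici (0:ℝ) \ J → IsPreconnected I →
      ∀ t1 ∈ I, ∀ t2 ∈ I, p t1 = p t2)
    {δ : ℝ} (hδ : 0 < δ) (hgap : ∀ t1 ∈ J, ∀ t2 ∈ J, t1 ≠ t2 → δ ≤ |t1 - t2|)
    (hv : UniformContinuousOn v (Set.Ici 0))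
    {ε : ℝ} (hε : 0 < ε) :
    ∃ L : ℝ, 0 < L ∧ L ≤ δ / 2 ∧ ∀ t : ℝ, δ ≤ t → ε ≤ |u t| →
      ∃ a : ℝ, 0 ≤ a ∧ t - L ≤ a ∧ ∀ s ∈ Set.Ioo a (a + L), ε / 2 ≤ |u s| := by
  obtain ⟨η, hη, hflat⟩ := (Metric.uniformContinuousOn_iff).1 hv (ε/2) (by linarith)
  refine ⟨min (δ/2) η, by positivity, min_le_left _ _, fun t ht hut => ?_⟩
  set L := min (δ/2) η with hLdef
  have hL : 0 < L := by positivity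
  have hLδ : L ≤ δ/2 := min_le_left _ _
  have hLη : L ≤ η := min_le_right _ _
  have ht0 : (0:ℝ) ≤ t := le_trans hδ.le ht
  -- common step: if p s = p t and |s - t| < L and 0 ≤ s, then ε/2 ≤ |u s|
  have hstep : ∀ s : ℝ, 0 ≤ s → |s - t| < L → p s = p t → ε / 2 ≤ |u s| := by
    intro s hs hst hps
    have hd : dist (v s) (v t) < ε / 2 :=
      hflat s hs t ht0 (by rw [Real.dist_eq]; exact lt_of_lt_of_le hst hLη)
    have hdd : |v s - v t| < ε / 2 := by rwa [Real.dist_eq] at hd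
    have h1 : u s - u t = v s - v t := by rw [hu s, hu t, hps]; ring
    have h2 : |u t| - |u s| ≤ |u s - u t| := by
      have := abs_sub_abs_le_abs_sub (u t) (u s)
      rwa [abs_sub_comm] at this
    rw [h1] at h2
    linarith
  by_cases hcase : (J ∩ Set.Ioo t (t + δ/2)) = ∅
  · -- no jump strictly to the right: use [t, t+L)
    refine ⟨t, ht0, by linarith, fun s hs => ?_⟩
    have hsub : Set.Ioo t (t + δ/2) ⊆ Set.Ici (0:ℝ) \ J := by
      intro x hx
      refine ⟨le_trans ht0 hx.1.le, fun hxJ => ?_⟩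
      exact Set.eq_empty_iff_forall_notMem.1 hcase x ⟨hxJ, hx⟩
    have hconst' := hconst _ hsub isPreconnected_Ioo
    -- p t equals the constant value on the right
    have hmem : t + δ/4 ∈ Set.Ioo t (t + δ/2) := ⟨by linarith, by linarith⟩
    set c := p (t + δ/4) with hc
    have hpt : p t = c := by
      have hne : (nhdsWithin t (Set.Ioo t (t + δ/2))).NeBot := by
        rw [← mem_closure_iff_nhdsWithin_neBot, closure_Ioo (by linarith : t ≠ t + δ/2)]
        exact ⟨le_refl t, by linarith⟩
      have h1 : Tendsto p (nhdsWithin t (Set.Ioo t (t + δ/2))) (nhds (p t)) :=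
        (hrc t ht0).mono_left (nhdsWithin_mono t (fun x hx => hx.1.le))
      have h2 : Tendsto p (nhdsWithin t (Set.Ioo t (t + δ/2))) (nhds c) := by
        refine Tendsto.congr' ?_ tendsto_const_nhds
        filter_upwards [self_mem_nhdsWithin] with x hx
        exact hconst' _ hmem _ hx
      exact tendsto_nhds_unique h1 h2
    rcases hs with ⟨hs1, hs2⟩
    have hsmem : s ∈ Set.Ioo t (t + δ/2) := ⟨hs1, by linarith⟩
    have hps : p s = p t := by rw [hpt]; exact hconst' _ hsmem _ hmem
    exact hstep s (le_trans ht0 hs1.le) (by rw [abs_of_nonneg (by linarith)]; linarith) hps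
  · -- jump j in (t, t+δ/2): then no jump in (t-δ/2, t], use (t-L, t]
    obtain ⟨j, hjJ, hjIoo⟩ := Set.nonempty_iff_ne_empty.2 hcase
    refine ⟨t - L, by linarith, le_refl _, fun s hs => ?_⟩
    have hsub : Set.Ioc (t - δ/2) t ⊆ Set.Ici (0:ℝ) \ J := by
      intro x hx
      refine ⟨show (0:ℝ) ≤ x by linarith [hx.1], fun hxJ => ?_⟩
      have hxj : x ≠ j := by rintro rfl; exact absurd hjIoo.1 (by linarith [hx.2])
      have habs : |x - j| < δ := by
        rw [abs_sub_lt_iff]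
        exact ⟨by linarith [hx.2, hjIoo.1], by linarith [hx.1, hjIoo.2]⟩
      linarith [hgap x hxJ j hjJ hxj]
    have hconst' := hconst _ hsub isPreconnected_Ioc
    have htmem : t ∈ Set.Ioc (t - δ/2) t := ⟨by linarith, le_refl t⟩
    rcases hs with ⟨hs1, hs2⟩
    have hs2' : s < t := by linarith
    have hsmem : s ∈ Set.Ioc (t - δ/2) t := ⟨by linarith, hs2'.le⟩
    have hps : p s = p t := hconst' _ hsmem _ htmem
    have hs0 : (0:ℝ) ≤ s := by linarith [hsmem.1]
    exact hstep s hs0 (by rw [abs_of_nonpos (by linarith)]; linarith) hps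


lemma tendsto_notPE {u : ℝ → ℝ} (hu : Measurable u) {C : ℝ}
    (hC : ∀ t : ℝ, 0 ≤ t → |u t| ≤ C)
    (h : Tendsto u atTop (nhds 0)) : ¬ ScalarPE u := by
  rintro ⟨β, T, hβ, hT, hPE⟩
  obtain ⟨N, hN⟩ := (Metric.tendsto_atTop.1 h) (Real.sqrt (β/2)) (Real.sqrt_pos.2 (by linarith))
  have hsq : ∀ τ, max N 0 ≤ τ → u τ ^ 2 ≤ β / 2 := by
    intro τ hτ
    have h1 := hN τ (le_trans (le_max_left N 0) hτ)
    rw [Real.dist_eq, sub_zero] at h1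
    have h2 : |u τ| ^ 2 < Real.sqrt (β/2) ^ 2 :=
      pow_lt_pow_left₀ h1 (abs_nonneg _) two_ne_zero
    rw [Real.sq_sqrt (by linarith : (0:ℝ) ≤ β/2)] at h2
    calc u τ ^ 2 = |u τ| ^ 2 := (sq_abs _).symm
      _ ≤ β / 2 := h2.le
  have h3 := avg_le hu hC hT (le_max_right N 0) hsq
  have h4 := hPE (max N 0) (le_max_right N 0)
  linarith

theorem stmt16 {q : ℕ} (w : ℝ → EuclideanSpace ℝ (Fin q))
    (hmeas : Measurable w) (hloc : LocallyIntegrable w volume)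
    (hbdd : ∃ M : ℝ, ∀ t : ℝ, 0 ≤ t → ‖w t‖ ≤ M)
    (hupc : UniformlyPiecewiseContinuous w) :
    (RegularRegressor w ∧ ConditionR w) ↔
      ∀ α : EuclideanSpace ℝ (Fin q),
        ¬ ScalarPE (fun t => (inner ℝ α (w t) : ℝ)) →
        Tendsto (fun t => (inner ℝ α (w t) : ℝ)) atTop (nhds 0) := by
  classical
  obtain ⟨M, hM⟩ := hbdd
  have humeas : ∀ α : EuclideanSpace ℝ (Fin q), Measurable (fun t => (inner ℝ α (w t) : ℝ)) :=
    fun α => measurable_const.inner hmeas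
  have hubd : ∀ α : EuclideanSpace ℝ (Fin q), ∀ t : ℝ, 0 ≤ t → |(inner ℝ α (w t) : ℝ)| ≤ ‖α‖ * M :=
    fun α t ht => le_trans (abs_real_inner_le_norm α (w t))
      (mul_le_mul_of_nonneg_left (hM t ht) (norm_nonneg α))
  constructor
  · rintro ⟨-, hR⟩ α hnPE
    by_contra hnot
    rw [Metric.tendsto_atTop] at hnot
    push_neg at hnot
    obtain ⟨ε, hε, hfreq⟩ := hnot
    have hfreq' : ∀ N : ℝ, ∃ t, N ≤ t ∧ ε ≤ |(inner ℝ α (w t) : ℝ)| := by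
      intro N; obtain ⟨t, ht, h⟩ := hfreq N
      exact ⟨t, ht, by rwa [Real.dist_eq, sub_zero] at h⟩
    have hα : α ≠ 0 := by
      rintro rfl
      obtain ⟨t, -, h⟩ := hfreq' 0
      rw [inner_zero_left, abs_zero] at h
      linarith
    have hαn : 0 < ‖α‖ := norm_pos_iff.2 hα
    obtain ⟨ρ, ⟨J, hJ0, hrc, hconst, δ, hδ, hgap⟩, hvUC⟩ := hupc
    have hg : Continuous (fun y : EuclideanSpace ℝ (Fin q) => (inner ℝ α y : ℝ)) :=
      continuous_const.inner continuous_id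
    have hvUC' : UniformContinuousOn (fun t => (inner ℝ α (w t - ρ t) : ℝ)) (Set.Ici 0) := by
      rw [Metric.uniformContinuousOn_iff]
      intro ε' hε'
      obtain ⟨d, hd, hδ'⟩ := Metric.uniformContinuousOn_iff.1 hvUC (ε' / (‖α‖ + 1)) (by positivity)
      refine ⟨d, hd, fun x hx y hy hxy => ?_⟩
      have h1 := hδ' x hx y hy hxy
      rw [dist_eq_norm] at h1 ⊢
      have h2 : (inner ℝ α ((w x - ρ x) - (w y - ρ y)) : ℝ)
          = (inner ℝ α (w x - ρ x) : ℝ) - (inner ℝ α (w y - ρ y) : ℝ) := inner_sub_right _ _ _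
      rw [Real.norm_eq_abs, ← h2]
      have h3 : |(inner ℝ α ((w x - ρ x) - (w y - ρ y)) : ℝ)|
          ≤ ‖α‖ * ‖(w x - ρ x) - (w y - ρ y)‖ := abs_real_inner_le_norm _ _
      have h4 : ‖(w x - ρ x) - (w y - ρ y)‖ < ε' / (‖α‖ + 1) := h1
      have h5 : (0:ℝ) ≤ ‖(w x - ρ x) - (w y - ρ y)‖ := norm_nonneg _
      have h6 : (0:ℝ) < ‖α‖ + 1 := by positivity
      have h7 : ‖α‖ * ‖(w x - ρ x) - (w y - ρ y)‖ < (‖α‖ + 1) * (ε' / (‖α‖ + 1)) := by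
        nlinarith [norm_nonneg α]
      have h8 : (‖α‖ + 1) * (ε' / (‖α‖ + 1)) = ε' := by field_simp
      linarith
    obtain ⟨L, hL, hLδ, hkeyL⟩ := key_pc
      (u := fun t => (inner ℝ α (w t) : ℝ))
      (p := fun t => (inner ℝ α (ρ t) : ℝ))
      (v := fun t => (inner ℝ α (w t - ρ t) : ℝ))
      (fun t => show (inner ℝ α (w t) : ℝ) = (inner ℝ α (ρ t) : ℝ) + (inner ℝ α (w t - ρ t) : ℝ) by
        rw [inner_sub_right]; ring)
      (fun t ht => (hg.continuousAt).comp_continuousWithinAt (hrc t ht))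
      (fun I hI hIc t1 h1 t2 h2 => show (inner ℝ α (ρ t1) : ℝ) = (inner ℝ α (ρ t2) : ℝ) by
        rw [hconst I hI hIc t1 h1 t2 h2])
      hδ hgap hvUC' hε
    set β₀ := ε ^ 2 / (4 * ‖α‖ ^ 2) with hβ₀def
    have hβ₀ : 0 < β₀ := by positivity
    have hub : ¬ BddAbove (ExcitationSet w α β₀ L) := by
      rintro ⟨B, hB⟩
      obtain ⟨t, ht1, ht2⟩ := hfreq' (max (B + L + 1) δ)
      have htδ : δ ≤ t := le_trans (le_max_right _ _) ht1
      obtain ⟨a, ha0, haL, hbound⟩ := hkeyL t htδ ht2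
      have hmem : a ∈ ExcitationSet w α β₀ L := by
        refine ⟨ha0, ?_⟩
        have hint : (ε/2) ^ 2 * L ≤ ∫ τ in a..(a + L), (inner ℝ α (w τ) : ℝ) ^ 2 :=
          int_lb (humeas α) (hubd α) ha0 hL (by linarith) hbound
        have heq : β₀ * ‖α‖ ^ 2 = (ε/2) ^ 2 := by
          rw [hβ₀def]; field_simp; ring
        rw [heq, one_div, inv_mul_eq_div, le_div_iff₀ hL]
        linarith
      have hle := hB hmem
      have : max (B + L + 1) δ ≤ t := ht1
      linarith [le_max_left (B + L + 1) δ]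
    rcases hR α with hdense | hball
    · obtain ⟨β', T', hβ', hT', Td, hTd, hden⟩ := hdense
      apply hnPE
      refine ⟨β' * ‖α‖ ^ 2 * T' / (Td + T'), Td + T', by positivity, by positivity, fun t ht => ?_⟩
      obtain ⟨s, hsmem, hsIcc⟩ := hden t ht
      obtain ⟨hs0, hsint⟩ := hsmem
      have h1 : T' * (β' * ‖α‖ ^ 2) ≤ ∫ τ in s..(s + T'), (inner ℝ α (w τ) : ℝ) ^ 2 := by
        rw [one_div, inv_mul_eq_div, le_div_iff₀ hT'] at hsint
        linarith
      have h2 := sub_int (humeas α) (hubd α) hT'.le ht hsIcc.1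
        (by linarith [hsIcc.2] : s + T' ≤ t + (Td + T'))
      rw [one_div, inv_mul_eq_div, le_div_iff₀ (by positivity : (0:ℝ) < Td + T')]
      have h3 : β' * ‖α‖ ^ 2 * T' / (Td + T') * (Td + T') = T' * (β' * ‖α‖ ^ 2) := by
        field_simp
      rw [h3]
      linarith
    · exact hub (hball β₀ L hβ₀ hL)
  · intro hb
    refine ⟨⟨⟨M, hM⟩, ?_⟩, ?_⟩
    · refine ⟨{ carrier := setOf (fun α : EuclideanSpace ℝ (Fin q) => Tendsto (fun t => (inner ℝ α (w t) : ℝ)) atTop (nhds 0)),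
                add_mem' := ?_, zero_mem' := ?_, smul_mem' := ?_ }, ?_⟩
      · intro a b ha hbm
        have h1 := ha.add hbm
        rw [add_zero] at h1
        refine h1.congr fun t => ?_
        rw [inner_add_left]
      · refine Tendsto.congr (fun t => ?_) tendsto_const_nhds
        rw [inner_zero_left]
      · intro c a ha
        have h1 := ha.const_mul c
        rw [mul_zero] at h1
        refine h1.congr fun t => ?_
        rw [real_inner_smul_left]
      · ext α
        constructor
        · exact fun hT => tendsto_notPE (humeas α) (hubd α) hT
        · exact fun h => hb α h
    · intro α
      by_cases hPE : ScalarPE (fun t => (inner ℝ α (w t) : ℝ))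
      · left
        obtain ⟨β, T, hβ, hT, h⟩ := hPE
        have hα : α ≠ 0 := by
          rintro rfl
          have h1 := h 0 le_rfl
          simp only [inner_zero_left] at h1
          rw [show ((0:ℝ)^2 : ℝ) = 0 from by ring] at h1
          simp at h1
          linarith
        have hαn : 0 < ‖α‖ := norm_pos_iff.2 hα
        refine ⟨β / ‖α‖ ^ 2, T, by positivity, hT, 1, one_pos,
          fun t ht => ⟨t, ⟨ht, ?_⟩, le_refl t, by linarith⟩⟩
        rw [div_mul_cancel₀ _ (by positivity : ‖α‖ ^ 2 ≠ 0)]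
        exact h t ht
      · by_cases hα : α = 0
        · left
          subst hα
          refine ⟨1, 1, one_pos, one_pos, 1, one_pos,
            fun t ht => ⟨t, ⟨ht, ?_⟩, le_refl t, by linarith⟩⟩
          simp
        · right
          intro β T hβ hT
          have htd := hb α hPE
          have hβα : 0 < β * ‖α‖ ^ 2 := by
            have := norm_pos_iff.2 hα
            positivity
          obtain ⟨N, hN⟩ := Metric.tendsto_atTop.1 htd (Real.sqrt (β * ‖α‖ ^ 2 / 2))
            (Real.sqrt_pos.2 (by linarith))
          refine ⟨max N 0, fun t htmem => ?_⟩
          by_contra hcon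
          push_neg at hcon
          obtain ⟨ht0, hint⟩ := htmem
          have hsq : ∀ τ, t ≤ τ → (inner ℝ α (w τ) : ℝ) ^ 2 ≤ β * ‖α‖ ^ 2 / 2 := by
            intro τ hτ
            have h1 := hN τ (by linarith [le_max_left N 0])
            rw [Real.dist_eq, sub_zero] at h1
            have h2 : |(inner ℝ α (w τ) : ℝ)| ^ 2 < Real.sqrt (β * ‖α‖ ^ 2 / 2) ^ 2 :=
              pow_lt_pow_left₀ h1 (abs_nonneg _) two_ne_zero
            rw [Real.sq_sqrt (by linarith : (0:ℝ) ≤ β * ‖α‖ ^ 2 / 2)] at h2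
            calc (inner ℝ α (w τ) : ℝ) ^ 2 = |(inner ℝ α (w τ) : ℝ)| ^ 2 := (sq_abs _).symm
              _ ≤ β * ‖α‖ ^ 2 / 2 := h2.le
          have h3 := avg_le (humeas α) (hubd α) hT ht0 hsq
          linarith
end
end
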